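/- arXiv:1202.0711 — 7 statements merged into one kernel-verified Lean document; each statement's English description precedes it below -/
import Mathlib

section
/- Let R be a commutative ring, n ≥ 1, Λ = M_{n×n}(R), and M a finitely presented Λ-module. Then for every 1 ≤ i ≤ n one has Fit_R(e_{ii}M) = Fit_R(e_{11}M); that is, Fit_Λ(M) = Fit_R(e_{ii}M) for any i. -/
open Matrix

section FitDefs

variable (R : Type*) [CommRing R]

/-- The ideal of all maximal minors of a rectangular matrix (this is the zero
ideal when there are fewer rows than columns). -/
noncomputable def minorsIdeal {a b : ℕ} (H : Matrix (Fin a) (Fin b) R) : Ideal R :=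
  Ideal.span {x : R | ∃ f : Fin b → Fin a, x = ((H.submatrix f id).det)}

/-- `(H, π)` is a finite presentation `R^a --H--> R^b --π->> M` of the `R`-module `M`,
where `H` acts by right multiplication on row vectors. -/
def IsPresentation {a b : ℕ} (H : Matrix (Fin a) (Fin b) R) (M : Type*)
    [AddCommGroup M] [Module R M] (π : (Fin b → R) →ₗ[R] M) : Prop :=
  Function.Surjective π ∧ LinearMap.ker π = LinearMap.range H.vecMulLinear

/-- The (zeroth) Fitting ideal of an `R`-module, defined as the supremum over all
finite presentations of the ideal of maximal minors; for a finitely presented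
module this agrees with the classical Fitting ideal computed from any single
presentation, since the latter is independent of the chosen presentation. -/
noncomputable def fitIdeal (M : Type*) [AddCommGroup M] [Module R M] : Ideal R :=
  ⨆ (a : ℕ) (b : ℕ) (H : Matrix (Fin a) (Fin b) R) (π : (Fin b → R) →ₗ[R] M)
    (_ : IsPresentation R H M π), minorsIdeal R H

end FitDefs

section MatrixModule

variable (n : ℕ) (R : Type*) [CommRing R] (M : Type*) [AddCommGroup M]
  [Module (Matrix (Fin n) (Fin n) R) M] [Module R M]
  [IsScalarTower R (Matrix (Fin n) (Fin n) R) M]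

/-- Left multiplication by the matrix unit `e_{ii}` as an `R`-linear endomorphism
of a module over the matrix ring. -/
noncomputable def eMul (i : Fin n) : M →ₗ[R] M where
  toFun x := Matrix.single i i (1 : R) • x
  map_add' x y := smul_add _ x y
  map_smul' r x := (smul_comm r (Matrix.single i i (1 : R)) x).symm

/-- The `R`-submodule `e_{ii}M` of a module `M` over the matrix ring. -/
noncomputable def eComponent (i : Fin n) : Submodule R M :=
  LinearMap.range (eMul n R M i)

end MatrixModule

/-! Multiplication by the matrix units `e_{ji}` and `e_{ij}` gives mutually inverse `R`-linear
maps `e_{ii}M ⇄ e_{jj}M`, because `e_{ij} e_{ji} = e_{ii}` acts as the identity on `e_{ii}M`.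
So all the `e_{ii}M` are isomorphic `R`-modules, and Fitting ideals are invariant under
isomorphism since an isomorphism carries presentations to presentations with the same matrix. -/

theorem IsPresentation.comp_linearEquiv {R : Type*} [CommRing R] {M N : Type*}
    [AddCommGroup M] [Module R M] [AddCommGroup N] [Module R N] {a b : ℕ}
    {H : Matrix (Fin a) (Fin b) R} {π : (Fin b → R) →ₗ[R] M}
    (hπ : IsPresentation R H M π) (e : M ≃ₗ[R] N) :
    IsPresentation R H N (e.toLinearMap ∘ₗ π) := by
  refine ⟨e.surjective.comp hπ.1, ?_⟩
  rw [LinearMap.ker_comp, LinearEquiv.ker, Submodule.comap_bot, hπ.2]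

theorem fitIdeal_le_of_linearEquiv {R : Type*} [CommRing R] {M N : Type*}
    [AddCommGroup M] [Module R M] [AddCommGroup N] [Module R N] (e : M ≃ₗ[R] N) :
    fitIdeal R M ≤ fitIdeal R N :=
  iSup₂_le fun a b => iSup₂_le fun H π => iSup_le fun hπ =>
    le_iSup₂_of_le a b <| le_iSup₂_of_le H (e.toLinearMap ∘ₗ π) <|
      le_iSup_of_le (hπ.comp_linearEquiv e) le_rfl

theorem fitIdeal_congr {R : Type*} [CommRing R] {M N : Type*} [AddCommGroup M]
    [Module R M] [AddCommGroup N] [Module R N] (e : M ≃ₗ[R] N) :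
    fitIdeal R M = fitIdeal R N :=
  (fitIdeal_le_of_linearEquiv e).antisymm (fitIdeal_le_of_linearEquiv e.symm)

section EComponent

variable {n : ℕ} {R : Type*} [CommRing R] {M : Type*} [AddCommGroup M]
  [Module (Matrix (Fin n) (Fin n) R) M] [Module R M]
  [IsScalarTower R (Matrix (Fin n) (Fin n) R) M]

theorem mem_eComponent_iff {i : Fin n} {x : M} :
    x ∈ eComponent n R M i ↔ single i i (1 : R) • x = x := by
  refine ⟨?_, fun h => ⟨x, h⟩⟩
  rintro ⟨y, rfl⟩
  change single i i (1 : R) • single i i (1 : R) • y = single i i (1 : R) • y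
  rw [← mul_smul, single_mul_single_same, one_mul]

theorem single_smul_mem_eComponent (i j : Fin n) (x : M) :
    single j i (1 : R) • x ∈ eComponent n R M j := by
  rw [mem_eComponent_iff, ← mul_smul, single_mul_single_same, one_mul]

noncomputable def eComponentMap (i j : Fin n) :
    eComponent n R M i →ₗ[R] eComponent n R M j :=
  (DistribSMul.toLinearMap R M (single j i (1 : R))).restrict
    fun x _ => single_smul_mem_eComponent i j x

theorem eComponentMap_comp_eComponentMap (i j : Fin n) :
    eComponentMap j i ∘ₗ eComponentMap i j = (LinearMap.id : eComponent n R M i →ₗ[R] _) := by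
  ext ⟨x, hx⟩
  change single i j (1 : R) • single j i (1 : R) • x = x
  rw [← mul_smul, single_mul_single_same, one_mul]
  exact mem_eComponent_iff.mp hx

noncomputable def eComponentEquiv (i j : Fin n) :
    eComponent n R M i ≃ₗ[R] eComponent n R M j :=
  .ofLinearMap (eComponentMap i j) (eComponentMap j i)
    (eComponentMap_comp_eComponentMap j i) (eComponentMap_comp_eComponentMap i j)

end EComponent

theorem fitIdeal_eComponent_eq_general (n : ℕ) (hn : 0 < n) (R : Type*) [CommRing R] (M : Type*)
    [AddCommGroup M] [Module (Matrix (Fin n) (Fin n) R) M] [Module R M]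
    [IsScalarTower R (Matrix (Fin n) (Fin n) R) M] (i : Fin n) :
    fitIdeal R (eComponent n R M i) = fitIdeal R (eComponent n R M ⟨0, hn⟩) :=
  fitIdeal_congr (eComponentEquiv i ⟨0, hn⟩)

/-- For a finitely presented module `M` over `Λ = M_{n×n}(R)` and any `1 ≤ i ≤ n`,
`Fit_R(e_{ii}M) = Fit_R(e_{11}M)`; that is, `Fit_Λ(M) = Fit_R(e_{ii}M)` for any `i`. -/
theorem fitIdeal_eComponent_eq (n : ℕ) (hn : 0 < n) (R : Type*) [CommRing R] (M : Type*)
    [AddCommGroup M] [Module (Matrix (Fin n) (Fin n) R) M] [Module R M]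
    [IsScalarTower R (Matrix (Fin n) (Fin n) R) M]
    [Module.FinitePresentation (Matrix (Fin n) (Fin n) R) M] (i : Fin n) :
    fitIdeal R (eComponent n R M i) = fitIdeal R (eComponent n R M ⟨0, hn⟩) :=
  fitIdeal_eComponent_eq_general n hn R M i
end

section
/- Let R be a commutative ring, n ≥ 1, Λ = M_{n×n}(R), and M a finitely presented Λ-module. Then Fit_Λ(M) ⊆ Ann_R(M), where Ann_R(M) = {r ∈ R : r·M = 0} is the annihilator of M for the R-action via scalar matrices. -/
open Matrix

/-
For a presentation `R^a --H--> R^b ->> N` and a square `b × b` submatrix `A` of `H`,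
`det A • v = (v ᵥ* adj A) ᵥ* A` lies in the row space of `H`, i.e. in the relations; hence
every maximal minor kills `N`, and `Fit_R(N) ⊆ Ann_R(N)` for every `R`-module `N`.
Over `Λ = M_n(R)` the matrix units give `x = ∑ᵢ e_{i1} (e_{1i} x)` with `e_{1i} x ∈ e_{11}M`,
so whatever kills `e_{11}M` kills `M`.
-/

section Minors

variable {R : Type*} [CommRing R]

theorem Matrix.det_smul_mem_range_vecMulLinear {m : Type*} [Fintype m] [DecidableEq m]
    (A : Matrix m m R) (v : m → R) : A.det • v ∈ LinearMap.range A.vecMulLinear :=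
  ⟨v ᵥ* A.adjugate, by
    rw [vecMulLinear_apply, vecMul_vecMul, adjugate_mul, vecMul_smul, vecMul_one]⟩

theorem Matrix.range_vecMulLinear_submatrix_le {l m n : Type*} [Fintype l] [Fintype m]
    (H : Matrix m n R) (f : l → m) :
    LinearMap.range (H.submatrix f id).vecMulLinear ≤ LinearMap.range H.vecMulLinear := by
  rw [range_vecMulLinear, range_vecMulLinear]
  exact Submodule.span_mono (Set.range_comp_subset_range f H.row)

theorem IsPresentation.minorsIdeal_le_annihilator {a b : ℕ} {H : Matrix (Fin a) (Fin b) R}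
    {N : Type*} [AddCommGroup N] [Module R N] {π : (Fin b → R) →ₗ[R] N}
    (hp : IsPresentation R H N π) : minorsIdeal R H ≤ Module.annihilator R N := by
  rw [minorsIdeal, Ideal.span_le]
  rintro _ ⟨f, rfl⟩
  rw [SetLike.mem_coe, Module.mem_annihilator]
  intro x
  obtain ⟨v, rfl⟩ := hp.1 x
  have hker : (H.submatrix f id).det • v ∈ LinearMap.ker π := by
    rw [hp.2]
    exact H.range_vecMulLinear_submatrix_le f
      ((H.submatrix f id).det_smul_mem_range_vecMulLinear v)
  rwa [LinearMap.mem_ker, map_smul] at hker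

theorem fitIdeal_le_module_annihilator (N : Type*) [AddCommGroup N] [Module R N] :
    fitIdeal R N ≤ Module.annihilator R N :=
  iSup_le fun _ => iSup_le fun _ => iSup_le fun _ => iSup_le fun _ =>
    iSup_le IsPresentation.minorsIdeal_le_annihilator

end Minors

theorem annihilator_eComponent_le {n : ℕ} {R : Type*} [CommRing R] {M : Type*} [AddCommGroup M]
    [Module (Matrix (Fin n) (Fin n) R) M] [Module R M]
    [IsScalarTower R (Matrix (Fin n) (Fin n) R) M] (k : Fin n) :
    Module.annihilator R (eComponent n R M k) ≤ Module.annihilator R M := by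
  intro r hr
  rw [Module.mem_annihilator] at hr ⊢
  intro x
  have hmem (i : Fin n) : single k i (1 : R) • x ∈ eComponent n R M k :=
    ⟨single k i (1 : R) • x, by
      change single k k (1 : R) • single k i (1 : R) • x = single k i (1 : R) • x
      rw [← mul_smul, single_mul_single_same, one_mul]⟩
  have hsum : x = ∑ i : Fin n, single i k (1 : R) • single k i (1 : R) • x := by
    simp_rw [← mul_smul, single_mul_single_same, one_mul, ← Finset.sum_smul, sum_single_one,
      one_smul]
  rw [hsum, Finset.smul_sum]
  refine Finset.sum_eq_zero fun i _ => ?_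
  have hkill : r • single k i (1 : R) • x = 0 := congrArg Subtype.val (hr ⟨_, hmem i⟩)
  rw [smul_comm, hkill, smul_zero]

theorem fitIdeal_le_annihilator_general (n : ℕ) (hn : 0 < n) (R : Type*) [CommRing R] (M : Type*)
    [AddCommGroup M] [Module (Matrix (Fin n) (Fin n) R) M] [Module R M]
    [IsScalarTower R (Matrix (Fin n) (Fin n) R) M] :
    fitIdeal R (eComponent n R M ⟨0, hn⟩) ≤ Module.annihilator R M :=
  (fitIdeal_le_module_annihilator _).trans (annihilator_eComponent_le _)

/-- For a finitely presented module `M` over `Λ = M_{n×n}(R)`, the Fitting invariant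
`Fit_Λ(M) = Fit_R(e_{11}M)` is contained in the annihilator `Ann_R(M)` of `M` for the
`R`-action via scalar matrices. -/
theorem fitIdeal_le_annihilator (n : ℕ) (hn : 0 < n) (R : Type*) [CommRing R] (M : Type*)
    [AddCommGroup M] [Module (Matrix (Fin n) (Fin n) R) M] [Module R M]
    [IsScalarTower R (Matrix (Fin n) (Fin n) R) M]
    [Module.FinitePresentation (Matrix (Fin n) (Fin n) R) M] :
    fitIdeal R (eComponent n R M ⟨0, hn⟩) ≤ Module.annihilator R M :=
  fitIdeal_le_annihilator_general n hn R M
end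

section
/- Let R be a commutative ring, n ≥ 1, Λ = M_{n×n}(R), and M a finitely presented Λ-module. For any homomorphism R → S of commutative rings, identifying S ⊗_R Λ with M_{n×n}(S), one has Fit_{M_{n×n}(S)}(S ⊗_R M) = S · Fit_Λ(M), i.e. the Fitting ideal of the base-changed module equals the extension of the ideal Fit_Λ(M) along R → S. -/
/-!
The Fitting ideal of a module presented by `π : R^b ↠ N` is the ideal generated by the
determinants of the `b × b` matrices whose rows lie in `ker π`: by multilinearity of the
determinant, this is the ideal of maximal minors of any matrix whose rows generate `ker π`.
It does not depend on `π`. Adding a generator `π v` replaces `ker π` by its preimage under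
`x ↦ init x + x_b • v`; a column operation followed by Laplace expansion along the last column
shows that this leaves the ideal unchanged, and two presentations are compared through their
concatenation.

Base change is right exact, so `S ⊗ N` is presented by the image over `S` of a presentation
matrix of `N`, whose maximal minors are the images of those of the original matrix.
Finally, `e₁₁M` is the cokernel of `1 - e₁₁` acting on `M`, so taking it commutes with base
change. It is finitely presented over `R` because `M` is, since `Λ` is finite free over `R`.
-/

open Matrix

section DeterminantalIdeal

variable {R : Type*} [CommRing R]

def detIdeal {b : ℕ} (K : Submodule R (Fin b → R)) : Ideal R :=
  Ideal.span {x | ∃ B : Matrix (Fin b) (Fin b) R, (∀ i, B i ∈ K) ∧ B.det = x}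

theorem det_mem_detIdeal {b : ℕ} {K : Submodule R (Fin b → R)} {B : Matrix (Fin b) (Fin b) R}
    (hB : ∀ i, B i ∈ K) : B.det ∈ detIdeal K :=
  Ideal.subset_span ⟨B, hB, rfl⟩

theorem detIdeal_le_iff {b : ℕ} {K : Submodule R (Fin b → R)} {I : Ideal R} :
    detIdeal K ≤ I ↔ ∀ B : Matrix (Fin b) (Fin b) R, (∀ i, B i ∈ K) → B.det ∈ I := by
  simp [detIdeal, Ideal.span_le, Set.subset_def]

theorem det_mul_mem_minorsIdeal {a b : ℕ} (C : Matrix (Fin b) (Fin a) R)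
    (H : Matrix (Fin a) (Fin b) R) : (C * H).det ∈ minorsIdeal R H := by
  have hrows : C * H = Matrix.of fun i => ∑ k, C i k • H k := by
    ext i j
    simp [mul_apply, Finset.sum_apply]
  rw [hrows]
  change (detRowAlternating : (Fin b → R) [⋀^Fin b]→ₗ[R] R).toMultilinearMap
    (fun i => ∑ k, C i k • H k) ∈ _
  rw [MultilinearMap.map_sum]
  refine Ideal.sum_mem _ fun r _ => ?_
  rw [MultilinearMap.map_smul_univ]
  exact Ideal.mul_mem_left _ _ (Ideal.subset_span ⟨r, rfl⟩)

theorem minorsIdeal_eq_detIdeal {a b : ℕ} (H : Matrix (Fin a) (Fin b) R) :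
    minorsIdeal R H = detIdeal (LinearMap.range H.vecMulLinear) := by
  refine le_antisymm (Ideal.span_le.mpr ?_) (detIdeal_le_iff.mpr fun B hB => ?_)
  · rintro _ ⟨f, rfl⟩
    exact det_mem_detIdeal fun i => ⟨Pi.single (f i) 1, by simp; rfl⟩
  · choose c hc using hB
    convert det_mul_mem_minorsIdeal (Matrix.of c) H
    ext i j
    simp [← hc i, mul_apply, vecMul, dotProduct]

theorem detIdeal_comap_funLeft {b c : ℕ} (e : Fin b ≃ Fin c) (K : Submodule R (Fin b → R)) :
    detIdeal (K.comap (LinearMap.funLeft R R e)) = detIdeal K := by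
  refine le_antisymm (detIdeal_le_iff.mpr fun B hB => ?_) (detIdeal_le_iff.mpr fun B hB => ?_)
  · rw [← det_submatrix_equiv_self e B]
    exact det_mem_detIdeal fun i => hB (e i)
  · rw [← det_submatrix_equiv_self e.symm B]
    refine det_mem_detIdeal fun j => ?_
    rw [Submodule.mem_comap]
    convert hB (e.symm j) using 1
    ext k
    simp

def initAddLastSMul {b : ℕ} (v : Fin b → R) : (Fin (b + 1) → R) →ₗ[R] (Fin b → R) :=
  LinearMap.funLeft R R Fin.castSucc + (LinearMap.proj (Fin.last b)).smulRight v

theorem initAddLastSMul_apply {b : ℕ} (v : Fin b → R) (x : Fin (b + 1) → R) :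
    initAddLastSMul v x = Fin.init x + x (Fin.last b) • v :=
  rfl

theorem detIdeal_comap_initAddLastSMul {b : ℕ} (K : Submodule R (Fin b → R)) (v : Fin b → R) :
    detIdeal (K.comap (initAddLastSMul v)) = detIdeal K := by
  refine le_antisymm (detIdeal_le_iff.mpr fun B hB => ?_) (detIdeal_le_iff.mpr fun B hB => ?_)
  · -- Right multiplication by `E` adds `v j` times the last column to column `j`.
    let E : Matrix (Fin (b + 1)) (Fin (b + 1)) R :=
      1 + vecMulVec (Pi.single (Fin.last b) 1) (Fin.snoc v 0)
    have hE : E.det = 1 := by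
      rw [det_of_isLowerTriangular]
      · refine Finset.prod_eq_one fun i _ => ?_
        refine Fin.lastCases ?_ (fun i => ?_) i <;> simp [E, vecMulVec_apply]
      · intro i j (hij : i < j)
        have : i ≠ Fin.last b := (hij.trans_le (Fin.le_last j)).ne
        simp [E, hij.ne, this, vecMulVec_apply]
    have hrow : ∀ p, Fin.init ((B * E) p) = initAddLastSMul v (B p) := by
      intro p
      ext j
      simp [E, Fin.init, initAddLastSMul_apply, mul_apply, vecMulVec_apply, Pi.single_apply,
        mul_add, Finset.sum_add_distrib, one_apply, mul_comm]
    rw [← mul_one B.det, ← hE, ← det_mul, det_succ_column _ (Fin.last b)]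
    refine Ideal.sum_mem _ fun p _ => Ideal.mul_mem_left _ _ (det_mem_detIdeal fun q => ?_)
    rw [Fin.succAbove_last]
    have h := Submodule.mem_comap.mp (hB (p.succAbove q))
    rw [← hrow] at h
    exact h
  · -- `B'` is the block matrix `[[B, 0], [-v, 1]]`.
    let B' : Matrix (Fin (b + 1)) (Fin (b + 1)) R :=
      Matrix.of (Fin.snoc (fun i => Fin.snoc (B i) 0) (Fin.snoc (-v) 1))
    have hminor : B'.submatrix Fin.castSucc Fin.castSucc = B := by
      ext i j
      simp [B']
    have hdet : B'.det = B.det := by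
      rw [det_succ_column _ (Fin.last b), Fin.sum_univ_castSucc, Fin.succAbove_last, hminor]
      simp [B']
    rw [← hdet]
    refine det_mem_detIdeal fun p => Submodule.mem_comap.mpr ?_
    refine Fin.lastCases ?_ (fun i => ?_) p
    · have : B' (Fin.last b) = Fin.snoc (-v) 1 := by ext j; simp [B']
      simp [this, initAddLastSMul_apply]
    · have : B' i.castSucc = Fin.snoc (B i) 0 := by ext j; simp [B']
      simpa [this, initAddLastSMul_apply] using hB i

end DeterminantalIdeal

section Generators

variable {R M : Type*} [CommRing R] [AddCommGroup M] [Module R M]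

open LinearMap (ker)

theorem Fintype.linearCombination_snoc {b : ℕ} (m : Fin b → M) (v : Fin b → R) :
    Fintype.linearCombination R (Fin.snoc m (Fintype.linearCombination R m v)) =
      Fintype.linearCombination R m ∘ₗ initAddLastSMul v := by
  refine LinearMap.ext fun x => ?_
  simp [Fintype.linearCombination_apply, Fin.sum_univ_castSucc, initAddLastSMul_apply, add_smul,
    Finset.sum_add_distrib, Finset.smul_sum, mul_smul, Fin.init]

theorem Fintype.linearCombination_append_comm {b c : ℕ} (m : Fin b → M) (m' : Fin c → M) :
    Fintype.linearCombination R (Fin.append m' m) =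
      Fintype.linearCombination R (Fin.append m m') ∘ₗ LinearMap.funLeft R R finAddFlip := by
  refine LinearMap.ext fun x => ?_
  simp [Fintype.linearCombination_apply, Fin.sum_univ_add, add_comm]

theorem Fintype.surjective_linearCombination_append {b c : ℕ} {m : Fin b → M}
    (hm : Function.Surjective (Fintype.linearCombination R m)) (m' : Fin c → M) :
    Function.Surjective (Fintype.linearCombination R (Fin.append m m')) := by
  rw [← LinearMap.range_eq_top, Fintype.range_linearCombination] at hm ⊢
  refine top_le_iff.mp (hm ▸ Submodule.span_mono ?_)
  rintro _ ⟨i, rfl⟩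
  exact ⟨Fin.castAdd c i, Fin.append_left m m' i⟩

theorem detIdeal_ker_linearCombination_snoc {b : ℕ} {m : Fin b → M}
    (hm : Function.Surjective (Fintype.linearCombination R m)) (w : M) :
    detIdeal (ker (Fintype.linearCombination R (Fin.snoc m w))) =
      detIdeal (ker (Fintype.linearCombination R m)) := by
  obtain ⟨v, rfl⟩ := hm w
  rw [Fintype.linearCombination_snoc, LinearMap.ker_comp, detIdeal_comap_initAddLastSMul]

theorem detIdeal_ker_linearCombination_append {b : ℕ} {m : Fin b → M}
    (hm : Function.Surjective (Fintype.linearCombination R m)) :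
    ∀ {c : ℕ} (m' : Fin c → M), detIdeal (ker (Fintype.linearCombination R (Fin.append m m'))) =
      detIdeal (ker (Fintype.linearCombination R m))
  | 0, m' => by rw [Fin.append_right_nil m m' rfl]; rfl
  | c + 1, m' => by
    rw [← Fin.snoc_init_self m', Fin.append_snoc, detIdeal_ker_linearCombination_snoc
      (Fintype.surjective_linearCombination_append hm _), detIdeal_ker_linearCombination_append hm]

theorem detIdeal_ker_eq_of_surjective {b c : ℕ} {π : (Fin b → R) →ₗ[R] M}
    {π' : (Fin c → R) →ₗ[R] M} (hπ : Function.Surjective π) (hπ' : Function.Surjective π') :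
    detIdeal (ker π) = detIdeal (ker π') := by
  obtain ⟨m, rfl⟩ : ∃ m : Fin b → M, Fintype.linearCombination R m = π :=
    ⟨fun i => π (Pi.single i 1), by ext; simp⟩
  obtain ⟨m', rfl⟩ : ∃ m' : Fin c → M, Fintype.linearCombination R m' = π' :=
    ⟨fun i => π' (Pi.single i 1), by ext; simp⟩
  rw [← detIdeal_ker_linearCombination_append hπ m', ← detIdeal_ker_linearCombination_append hπ' m,
    Fintype.linearCombination_append_comm, LinearMap.ker_comp, detIdeal_comap_funLeft]

end Generators

section Presentation

variable {R N : Type*} [CommRing R] [AddCommGroup N] [Module R N]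

theorem IsPresentation.minorsIdeal_eq {a b : ℕ} {H : Matrix (Fin a) (Fin b) R}
    {π : (Fin b → R) →ₗ[R] N} (hp : IsPresentation R H N π) :
    minorsIdeal R H = detIdeal (LinearMap.ker π) := by
  rw [hp.2, minorsIdeal_eq_detIdeal]

theorem IsPresentation.fitIdeal_eq {a b : ℕ} {H : Matrix (Fin a) (Fin b) R}
    {π : (Fin b → R) →ₗ[R] N} (hp : IsPresentation R H N π) :
    fitIdeal R N = minorsIdeal R H := by
  refine le_antisymm ?_ (le_iSup_of_le a <| le_iSup_of_le b <| le_iSup_of_le H <|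
    le_iSup_of_le π <| le_iSup_of_le hp le_rfl)
  refine iSup_le fun _ => iSup_le fun _ => iSup_le fun H' => iSup_le fun π' =>
    iSup_le fun hp' => ?_
  rw [hp'.minorsIdeal_eq, hp.minorsIdeal_eq, detIdeal_ker_eq_of_surjective hp'.1 hp.1]

theorem Module.FinitePresentation.exists_isPresentation [Module.FinitePresentation R N] :
    ∃ (a b : ℕ) (H : Matrix (Fin a) (Fin b) R) (π : (Fin b → R) →ₗ[R] N),
      IsPresentation R H N π := by
  obtain ⟨b, π, hπ⟩ := Module.Finite.exists_fin' R N
  obtain ⟨a, v, hv⟩ :=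
    Submodule.fg_iff_exists_fin_generating_family.mp (Module.FinitePresentation.fg_ker π hπ)
  exact ⟨a, b, Matrix.of v, π, hπ, by rw [range_vecMulLinear, ← hv]; rfl⟩

end Presentation

section BaseChange

variable {R S : Type*} [CommRing R] [CommRing S]

theorem minorsIdeal_map (φ : R →+* S) {a b : ℕ} (H : Matrix (Fin a) (Fin b) R) :
    minorsIdeal S (H.map φ) = (minorsIdeal R H).map φ := by
  rw [minorsIdeal, minorsIdeal, Ideal.map_span]
  congr 1
  ext x
  simp [RingHom.map_det, eq_comm, submatrix_map]

variable [Algebra R S] {N N' : Type*} [AddCommGroup N] [Module R N] [AddCommGroup N']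
  [Module R N'] [Module S N'] [IsScalarTower R S N']

theorem IsPresentation.exists_of_isBaseChange {a b : ℕ} {H : Matrix (Fin a) (Fin b) R}
    {π : (Fin b → R) →ₗ[R] N} (hp : IsPresentation R H N π) {g : N →ₗ[R] N'}
    (hg : IsBaseChange S g) :
    ∃ π' : (Fin b → S) →ₗ[S] N', IsPresentation S (H.map (algebraMap R S)) N' π' := by
  set H' := H.map (algebraMap R S)
  let extend (k : ℕ) : (Fin k → R) →ₗ[R] (Fin k → S) := (Algebra.linearMap R S).compLeft (Fin k)
  have hextend (k : ℕ) : IsBaseChange S (extend k) := (IsBaseChange.linearMap R S).finitePow _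
  have hcomm : extend b ∘ₗ H.vecMulLinear = H'.vecMulLinear.restrictScalars R ∘ₗ extend a :=
    LinearMap.ext fun x => funext fun j => RingHom.map_vecMul (algebraMap R S) H x j
  have hexact : Function.Exact H.vecMulLinear π := LinearMap.exact_iff.mpr hp.2
  -- By right exactness, `θ` exhibits the cokernel of `H'` as a base change of `N`.
  let θ : N →ₗ[R] (Fin b → S) ⧸ LinearMap.range H'.vecMulLinear :=
    (LinearMap.range H.vecMulLinear).liftQ
      ((LinearMap.range H'.vecMulLinear).mkQ.restrictScalars R ∘ₗ extend b) (by
        rintro _ ⟨x, rfl⟩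
        simpa using ⟨extend a x, (LinearMap.congr_fun hcomm x).symm⟩) ∘ₗ
      (hexact.linearEquivOfSurjective hp.1).symm.toLinearMap
  have hθ : IsBaseChange S θ :=
    IsBaseChange.of_right_exact S (extend a) (extend b) θ hcomm (by ext x; simp [θ])
      (hextend a) (hextend b) hexact hp.1 (LinearMap.exact_map_mkQ_range _)
      (Submodule.mkQ_surjective _)
  let e : N' ≃ₗ[S] (Fin b → S) ⧸ LinearMap.range H'.vecMulLinear := hg.equiv.symm ≪≫ₗ hθ.equiv
  refine ⟨e.symm.toLinearMap ∘ₗ Submodule.mkQ _,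
    e.symm.surjective.comp (Submodule.mkQ_surjective _), ?_⟩
  rw [LinearEquiv.ker_comp, Submodule.ker_mkQ]

theorem fitIdeal_eq_map_of_isBaseChange [Module.FinitePresentation R N] {g : N →ₗ[R] N'}
    (hg : IsBaseChange S g) : fitIdeal S N' = (fitIdeal R N).map (algebraMap R S) := by
  obtain ⟨a, b, H, π, hp⟩ := Module.FinitePresentation.exists_isPresentation (R := R) (N := N)
  obtain ⟨π', hp'⟩ := hp.exists_of_isBaseChange hg
  rw [hp'.fitIdeal_eq, hp.fitIdeal_eq, minorsIdeal_map]

end BaseChange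

section Idempotent

theorem LinearMap.IsIdempotentElem.exact_one_sub_rangeRestrict {R M : Type*} [Ring R]
    [AddCommGroup M] [Module R M] {p : M →ₗ[R] M} (hp : IsIdempotentElem p) :
    Function.Exact ⇑(1 - p) p.rangeRestrict :=
  LinearMap.exact_iff.mpr <| by
    rw [LinearMap.ker_rangeRestrict, LinearMap.IsIdempotentElem.ker_eq_range_one_sub hp]

theorem Module.FinitePresentation.range_of_isIdempotentElem {R M : Type*} [Ring R]
    [AddCommGroup M] [Module R M] [Module.FinitePresentation R M] {p : M →ₗ[R] M}
    (hp : IsIdempotentElem p) : Module.FinitePresentation R (LinearMap.range p) :=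
  Module.finitePresentation_of_surjective p.rangeRestrict p.surjective_rangeRestrict
    ((LinearMap.IsIdempotentElem.exact_one_sub_rangeRestrict hp).linearMap_ker_eq ▸
      Submodule.fg_range _)

theorem IsBaseChange.rangeRestrict_of_isIdempotentElem {R S M M' : Type*} [CommRing R]
    [CommRing S] [Algebra R S] [AddCommGroup M] [Module R M] [AddCommGroup M'] [Module R M']
    [Module S M'] [IsScalarTower R S M'] {f : M →ₗ[R] M'} (hf : IsBaseChange S f)
    {p : M →ₗ[R] M} {p' : M' →ₗ[S] M'} (hp : IsIdempotentElem p) (hp' : IsIdempotentElem p')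
    (hcomm : f ∘ₗ p = p'.restrictScalars R ∘ₗ f) :
    IsBaseChange S (p'.rangeRestrict.restrictScalars R ∘ₗ f ∘ₗ (LinearMap.range p).subtype) := by
  refine IsBaseChange.of_right_exact S f f _ ?_ ?_ hf hf
    (LinearMap.IsIdempotentElem.exact_one_sub_rangeRestrict hp) p.surjective_rangeRestrict
    (LinearMap.IsIdempotentElem.exact_one_sub_rangeRestrict hp') p'.surjective_rangeRestrict
  · ext m
    simpa using LinearMap.congr_fun hcomm m
  · ext m
    change p' (f (p m)) = p' (f m)
    rw [show f (p m) = p' (f m) from LinearMap.congr_fun hcomm m]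
    exact LinearMap.congr_fun hp'.eq (f m)

end Idempotent

theorem Module.FinitePresentation.restrictScalars (R A M : Type*) [CommRing R] [Ring A]
    [Algebra R A] [Module.FinitePresentation R A] [AddCommGroup M] [Module R M] [Module A M]
    [IsScalarTower R A M] [Module.FinitePresentation A M] : Module.FinitePresentation R M := by
  obtain ⟨k, K, e, hK⟩ := Module.FinitePresentation.exists_fin A M
  have : Module.Finite A K := Module.Finite.iff_fg.mpr hK
  have : Module.Finite R K := Module.Finite.trans A K
  refine Module.finitePresentation_of_surjective ((e.symm.toLinearMap ∘ₗ K.mkQ).restrictScalars R)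
    (e.symm.surjective.comp K.mkQ_surjective) ?_
  rw [LinearMap.ker_restrictScalars, LinearEquiv.ker_comp, Submodule.ker_mkQ]
  exact Module.Finite.iff_fg.mp this

theorem isIdempotentElem_eMul (n : ℕ) (R : Type*) [CommRing R] (M : Type*) [AddCommGroup M]
    [Module (Matrix (Fin n) (Fin n) R) M] [Module R M]
    [IsScalarTower R (Matrix (Fin n) (Fin n) R) M] (i : Fin n) :
    IsIdempotentElem (eMul n R M i) :=
  LinearMap.ext fun x => by simp [eMul, smul_smul]

/-- Base change: let `M` be a finitely presented module over `Λ = M_{n×n}(R)`,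
let `R → S` be a homomorphism of commutative rings, and let `M'` (a module over
`M_{n×n}(S)`) be the base change `S ⊗_R M`, realised by an `R`-linear map
`f : M → M'` which is a base change along `R → S` and is compatible with the
identification `S ⊗_R M_{n×n}(R) = M_{n×n}(S)` (entrywise extension of scalars).
Then `Fit_{M_{n×n}(S)}(S ⊗_R M) = S · Fit_Λ(M)`, the extension of the ideal
`Fit_Λ(M)` along `R → S`. -/
theorem fitIdeal_baseChange (n : ℕ) (hn : 0 < n) (R S : Type*) [CommRing R] [CommRing S]
    [Algebra R S] (M : Type*) [AddCommGroup M] [Module (Matrix (Fin n) (Fin n) R) M]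
    [Module R M] [IsScalarTower R (Matrix (Fin n) (Fin n) R) M]
    [Module.FinitePresentation (Matrix (Fin n) (Fin n) R) M]
    (M' : Type*) [AddCommGroup M'] [Module (Matrix (Fin n) (Fin n) S) M']
    [Module S M'] [IsScalarTower S (Matrix (Fin n) (Fin n) S) M']
    [Module R M'] [IsScalarTower R S M']
    (f : M →ₗ[R] M') (hbc : IsBaseChange S f)
    (hcompat : ∀ (A : Matrix (Fin n) (Fin n) R) (m : M),
      f (A • m) = (A.map (algebraMap R S)) • f m) :
    fitIdeal S (eComponent n S M' ⟨0, hn⟩) =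
      Ideal.map (algebraMap R S) (fitIdeal R (eComponent n R M ⟨0, hn⟩)) := by
  have : Module.FinitePresentation R (Matrix (Fin n) (Fin n) R) :=
    Module.finitePresentation_of_projective R _
  have : Module.FinitePresentation R M :=
    Module.FinitePresentation.restrictScalars R (Matrix (Fin n) (Fin n) R) M
  -- Unfolded so that the submodule instances below match those of the goal syntactically.
  unfold eComponent
  have : Module.FinitePresentation R (LinearMap.range (eMul n R M ⟨0, hn⟩)) :=
    Module.FinitePresentation.range_of_isIdempotentElem (isIdempotentElem_eMul n R M _)
  have hcomm : f ∘ₗ eMul n R M ⟨0, hn⟩ = (eMul n S M' ⟨0, hn⟩).restrictScalars R ∘ₗ f := by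
    ext m
    simp [eMul, hcompat]
  exact fitIdeal_eq_map_of_isBaseChange (hbc.rangeRestrict_of_isIdempotentElem
    (isIdempotentElem_eMul n R M _) (isIdempotentElem_eMul n S M' _) hcomm)
end

section
/- Let R be a commutative ring and let 0 → M₁ → M₂ → M₃ → 0 be a short exact sequence of finitely presented R-modules. If M₃ has a quadratic presentation, i.e. there is an exact sequence R^k --h--> R^k ->> M₃ for some k (with h not required to be injective), then Fit_R(M₁) · Fit_R(M₃) = Fit_R(M₂). -/
open Matrix

/-! Given presentations of `M₁` (relation matrix `H₁`) and of `M₃` (square relation matrix `H₃`),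
lift the generators of `M₃` to `M₂`; the lifted relations of `M₃` become relations of `M₂` after
correcting them by elements of `M₁`, so `M₂` is presented by the block lower triangular matrix
`[[H₁, 0], [C, H₃]]`. Since `H₃` is square, a maximal minor of this matrix either vanishes or is,
up to sign, a maximal minor of `H₁` times `det H₃`, and conversely every such product is a maximal
minor. Independence of the presentation (Fitting's lemma) is the case `M₃ = 0`, presented by an
identity matrix: gluing the generators of a second presentation onto a first one, and vice versa,
gives two presentations with the same relation module up to a permutation of the generators, and
maximal minors only depend on the span of the rows. -/

theorem Function.Injective.exists_perm_comp_eq_sumMap {α β γ : Type*} [Fintype α] [Fintype β]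
    {f : α ⊕ β → γ ⊕ β} (hf : Function.Injective f) (hβ : ∀ j, Sum.inr j ∈ Set.range f) :
    ∃ (σ : Equiv.Perm (α ⊕ β)) (g : α → γ), f ∘ σ = Sum.map g id := by
  classical
  choose t ht using hβ
  have ht_inj : Function.Injective t := fun i j h =>
    Sum.inr_injective ((ht i).symm.trans (h ▸ ht j))
  have hcard : Fintype.card α = Fintype.card {x // x ∉ Set.range t} := by
    rw [Fintype.card_subtype_compl, Set.card_range_of_injective ht_inj, Fintype.card_sum]
    omega
  let σ : Equiv.Perm (α ⊕ β) :=
    ((Equiv.sumCongr (Fintype.equivOfCardEq hcard) (Equiv.ofInjective t ht_inj)).trans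
      (Equiv.sumComm _ _)).trans (Equiv.sumCompl (· ∈ Set.range t))
  have hleft : ∀ a, ∃ c, f (σ (Sum.inl a)) = Sum.inl c := fun a => by
    have hx : σ (Sum.inl a) ∉ Set.range t := (Fintype.equivOfCardEq hcard a).2
    rcases hfx : f (σ (Sum.inl a)) with c | j
    · exact ⟨c, rfl⟩
    · exact absurd ⟨j, hf ((ht j).trans hfx.symm)⟩ hx
  choose g hg using hleft
  refine ⟨σ, g, funext fun x => ?_⟩
  rcases x with a | j
  · exact hg a
  · exact ht j

namespace Matrix

variable {R : Type*} [CommRing R]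

noncomputable def maxMinorsIdeal {ι κ : Type*} [Fintype κ] [DecidableEq κ] (H : Matrix ι κ R) :
    Ideal R :=
  Ideal.span {x : R | ∃ f : κ → ι, x = (H.submatrix f id).det}

section Minors

variable {ι ι' κ κ' n : Type*} [Fintype κ] [DecidableEq κ] [Fintype n] [DecidableEq n]

theorem det_submatrix_mem_maxMinorsIdeal (H : Matrix ι κ R) (f : κ → ι) :
    (H.submatrix f id).det ∈ H.maxMinorsIdeal :=
  Ideal.subset_span ⟨f, rfl⟩

theorem det_submatrix_eq_zero_of_not_injective (H : Matrix ι n R) {f : n → ι}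
    (hf : ¬Function.Injective f) : (H.submatrix f id).det = 0 := by
  obtain ⟨i, j, hfij, hij⟩ := Function.not_injective_iff.mp hf
  exact det_zero_of_row_eq hij (funext fun k => by simp [hfij])

theorem det_mem_maxMinorsIdeal_of_forall_mem_span [Fintype ι] (W : Matrix ι n R)
    (V : Matrix n n R) (hV : ∀ i, V i ∈ Submodule.span R (Set.range W)) :
    V.det ∈ W.maxMinorsIdeal := by
  choose c hc using fun i => (Submodule.mem_span_range_iff_exists_fun R).mp (hV i)
  have hdet : V.det = ∑ r : n → ι, (∏ i, c i (r i)) • (W.submatrix r id).det := by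
    calc V.det = detRowAlternating.toMultilinearMap (fun i => ∑ x, c i x • W x) := by
          rw [show (fun i => ∑ x, c i x • W x) = V from funext hc]; rfl
      _ = _ := by
          rw [MultilinearMap.map_sum]
          simp_rw [MultilinearMap.map_smul_univ]
          rfl
  rw [hdet]
  exact Ideal.sum_mem _ fun r _ => Submodule.smul_mem _ _ (det_submatrix_mem_maxMinorsIdeal W r)

theorem maxMinorsIdeal_le_of_forall_mem_span [Fintype ι] {H : Matrix ι κ R} {H' : Matrix ι' κ R}
    (h : ∀ i, H' i ∈ Submodule.span R (Set.range H)) : H'.maxMinorsIdeal ≤ H.maxMinorsIdeal := by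
  rw [maxMinorsIdeal, Ideal.span_le]
  rintro _ ⟨f, rfl⟩
  exact det_mem_maxMinorsIdeal_of_forall_mem_span H _ fun i => h (f i)

theorem maxMinorsIdeal_eq_of_range_vecMulLinear_eq [Fintype ι] [Fintype ι'] {H : Matrix ι κ R}
    {H' : Matrix ι' κ R} (h : LinearMap.range H.vecMulLinear = LinearMap.range H'.vecMulLinear) :
    H.maxMinorsIdeal = H'.maxMinorsIdeal := by
  rw [range_vecMulLinear, range_vecMulLinear] at h
  refine le_antisymm (maxMinorsIdeal_le_of_forall_mem_span fun i => ?_)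
    (maxMinorsIdeal_le_of_forall_mem_span fun i => ?_)
  · exact h ▸ Submodule.subset_span ⟨i, rfl⟩
  · exact h.symm ▸ Submodule.subset_span ⟨i, rfl⟩

theorem maxMinorsIdeal_eq_bot_of_card_lt [Fintype ι] (W : Matrix ι n R)
    (h : Fintype.card ι < Fintype.card n) : W.maxMinorsIdeal = ⊥ := by
  rw [maxMinorsIdeal, Ideal.span_eq_bot]
  rintro _ ⟨r, rfl⟩
  exact det_submatrix_eq_zero_of_not_injective W fun hr =>
    (Fintype.card_le_of_injective r hr).not_gt h

theorem maxMinorsIdeal_reindex [DecidableEq κ'] [Fintype κ'] (H : Matrix ι κ R) (eι : ι ≃ ι')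
    (eκ : κ ≃ κ') : (H.reindex eι eκ).maxMinorsIdeal = H.maxMinorsIdeal := by
  have key : ∀ f : κ' → ι', ((H.reindex eι eκ).submatrix f id).det =
      (H.submatrix (eι.symm ∘ f ∘ eκ) id).det := fun f => by
    rw [← det_submatrix_equiv_self eκ.symm]
    simp [Function.comp_def]
  refine le_antisymm ?_ ?_ <;> rw [maxMinorsIdeal, Ideal.span_le] <;> rintro _ ⟨f, rfl⟩
  · exact key f ▸ det_submatrix_mem_maxMinorsIdeal H _
  · have := key (eι ∘ f ∘ eκ.symm)
    simp only [Function.comp_def, Equiv.symm_apply_apply] at this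
    exact this ▸ det_submatrix_mem_maxMinorsIdeal _ _

theorem maxMinorsIdeal_eq_span_det (D : Matrix n n R) : D.maxMinorsIdeal = Ideal.span {D.det} := by
  refine le_antisymm ?_ ?_
  · rw [maxMinorsIdeal, Ideal.span_le]
    rintro _ ⟨f, rfl⟩
    by_cases hf : Function.Injective f
    · rw [SetLike.mem_coe, show D.submatrix f id = D.submatrix
        (Equiv.ofBijective f (Finite.injective_iff_bijective.mp hf)) id from rfl, det_permute]
      exact Ideal.mul_mem_left _ _ (Ideal.mem_span_singleton_self _)
    · rw [SetLike.mem_coe, det_submatrix_eq_zero_of_not_injective D hf]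
      exact zero_mem _
  · rw [Ideal.span_le, Set.singleton_subset_iff]
    simpa using det_submatrix_mem_maxMinorsIdeal D id

theorem maxMinorsIdeal_one : (1 : Matrix n n R).maxMinorsIdeal = ⊤ := by
  rw [maxMinorsIdeal_eq_span_det, det_one, Ideal.span_singleton_one]

end Minors

section Blocks

theorem fromBlocks_zero₁₂_submatrix_sum_map {ι₁ ι₂ κ₁ κ₂ ι₁' ι₂' : Type*} (A : Matrix ι₁ κ₁ R)
    (C : Matrix ι₂ κ₁ R) (D : Matrix ι₂ κ₂ R) (g : ι₁' → ι₁) (h : ι₂' → ι₂) :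
    (fromBlocks A 0 C D).submatrix (Sum.map g h) id =
      fromBlocks (A.submatrix g id) 0 (C.submatrix h id) (D.submatrix h id) := by
  ext (i | i) (j | j) <;> rfl

variable {ι₁ ι₂ κ₁ κ₂ : Type*} [Fintype κ₁] [DecidableEq κ₁] [Fintype κ₂] [DecidableEq κ₂]

theorem mul_maxMinorsIdeal_le_fromBlocks_zero₁₂ (A : Matrix ι₁ κ₁ R) (C : Matrix ι₂ κ₁ R)
    (D : Matrix ι₂ κ₂ R) :
    A.maxMinorsIdeal * D.maxMinorsIdeal ≤ (fromBlocks A 0 C D).maxMinorsIdeal := by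
  rw [maxMinorsIdeal, maxMinorsIdeal, Ideal.span_mul_span', Ideal.span_le]
  rintro _ ⟨_, ⟨g, rfl⟩, _, ⟨h, rfl⟩, rfl⟩
  have := det_submatrix_mem_maxMinorsIdeal (fromBlocks A 0 C D) (Sum.map g h)
  rwa [fromBlocks_zero₁₂_submatrix_sum_map, det_fromBlocks_zero₁₂] at this

theorem det_submatrix_fromBlocks_zero₁₂_eq_zero (A : Matrix ι₁ κ₁ R) (C : Matrix κ₂ κ₁ R)
    (D : Matrix κ₂ κ₂ R) {f : κ₁ ⊕ κ₂ → ι₁ ⊕ κ₂} {j₀ : κ₂} (hj₀ : Sum.inr j₀ ∉ Set.range f) :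
    ((fromBlocks A 0 C D).submatrix f id).det = 0 := by
  set B := fromBlocks A 0 C D
  -- The rows all lie in the span of the unit vectors of the first block and the bottom rows
  -- other than `j₀`: fewer vectors than the size of the matrix.
  let W : Matrix (κ₁ ⊕ {j // j ≠ j₀}) (κ₁ ⊕ κ₂) R :=
    Sum.elim (fun c => Pi.single (Sum.inl c) 1) (fun j => B (Sum.inr j))
  have hW : W.maxMinorsIdeal = ⊥ := by
    refine maxMinorsIdeal_eq_bot_of_card_lt W ?_
    have := Fintype.card_pos_iff.mpr ⟨j₀⟩
    simp only [Fintype.card_sum, Fintype.card_subtype_compl, Fintype.card_unique]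
    omega
  have hrows : ∀ i, B.submatrix f id i ∈ Submodule.span R (Set.range W) := by
    intro i
    rcases hfi : f i with a | j
    · have hrow : B.submatrix f id i = ∑ c, A a c • W (Sum.inl c) := by
        ext (c | j) <;> simp [B, W, hfi, Pi.single_apply]
      rw [hrow]
      exact Submodule.sum_mem _ fun c _ => Submodule.smul_mem _ _ (Submodule.subset_span ⟨_, rfl⟩)
    · have hj : j ≠ j₀ := by
        rintro rfl
        exact hj₀ ⟨i, hfi⟩
      have hrow : B.submatrix f id i = W (Sum.inr ⟨j, hj⟩) := by
        ext k
        simp [B, W, hfi]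
      exact Submodule.subset_span ⟨_, hrow.symm⟩
  simpa [hW] using det_mem_maxMinorsIdeal_of_forall_mem_span W _ hrows

theorem det_submatrix_fromBlocks_zero₁₂_mem (A : Matrix ι₁ κ₁ R) (C : Matrix κ₂ κ₁ R)
    (D : Matrix κ₂ κ₂ R) (f : κ₁ ⊕ κ₂ → ι₁ ⊕ κ₂) :
    ((fromBlocks A 0 C D).submatrix f id).det ∈ A.maxMinorsIdeal * Ideal.span {D.det} := by
  set B := fromBlocks A 0 C D
  by_cases hβ : ∀ j, Sum.inr j ∈ Set.range f
  · by_cases hf : Function.Injective f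
    · obtain ⟨σ, g, hσ⟩ := hf.exists_perm_comp_eq_sumMap hβ
      have hB : (B.submatrix f id).submatrix σ id = fromBlocks (A.submatrix g id) 0 C D := by
        rw [submatrix_submatrix, Function.comp_id, hσ, fromBlocks_zero₁₂_submatrix_sum_map]
        rfl
      have hdet := det_permute σ.symm ((B.submatrix f id).submatrix σ id)
      rw [submatrix_submatrix, Function.comp_id, Equiv.self_comp_symm, submatrix_id_id, hB,
        det_fromBlocks_zero₁₂] at hdet
      rw [hdet]
      exact Ideal.mul_mem_left _ _ (Ideal.mul_mem_mul (det_submatrix_mem_maxMinorsIdeal A g)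
        (Ideal.mem_span_singleton_self _))
    · rw [det_submatrix_eq_zero_of_not_injective B hf]
      exact zero_mem _
  · obtain ⟨j₀, hj₀⟩ := not_forall.mp hβ
    rw [det_submatrix_fromBlocks_zero₁₂_eq_zero A C D hj₀]
    exact zero_mem _

theorem maxMinorsIdeal_fromBlocks_zero₁₂ (A : Matrix ι₁ κ₁ R) (C : Matrix κ₂ κ₁ R)
    (D : Matrix κ₂ κ₂ R) :
    (fromBlocks A 0 C D).maxMinorsIdeal = A.maxMinorsIdeal * D.maxMinorsIdeal := by
  refine le_antisymm ?_ (mul_maxMinorsIdeal_le_fromBlocks_zero₁₂ A C D)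
  rw [maxMinorsIdeal_eq_span_det D]
  refine Ideal.span_le.mpr ?_
  rintro _ ⟨f, rfl⟩
  exact det_submatrix_fromBlocks_zero₁₂_mem A C D f

end Blocks

section Presentations

variable {M M₁ M₂ M₃ : Type*} [AddCommGroup M] [Module R M] [AddCommGroup M₁] [Module R M₁]
  [AddCommGroup M₂] [Module R M₂] [AddCommGroup M₃] [Module R M₃]
  {ι ι' ι₁ ι₃ κ κ' κ₁ κ₃ : Type*} [Fintype ι] [Fintype ι'] [Fintype ι₁] [Fintype ι₃]

def Presents (H : Matrix ι κ R) (π : (κ → R) →ₗ[R] M) : Prop :=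
  Function.Surjective π ∧ LinearMap.ker π = LinearMap.range H.vecMulLinear

theorem Presents.map_vecMul {H : Matrix ι κ R} {π : (κ → R) →ₗ[R] M} (hH : H.Presents π)
    (t : ι → R) : π (t ᵥ* H) = 0 :=
  LinearMap.mem_ker.mp (hH.2 ▸ ⟨t, rfl⟩)

theorem Presents.map_row [DecidableEq ι] {H : Matrix ι κ R} {π : (κ → R) →ₗ[R] M}
    (hH : H.Presents π) (i : ι) : π (H i) = 0 := by
  rw [show H i = Pi.single i 1 ᵥ* H from (single_one_vecMul i H).symm]
  exact hH.map_vecMul _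

theorem Presents.reindex {H : Matrix ι κ R} {π : (κ → R) →ₗ[R] M} (hH : H.Presents π)
    (eι : ι ≃ ι') (eκ : κ ≃ κ') :
    (H.reindex eι eκ).Presents (π ∘ₗ (LinearEquiv.funCongrLeft R R eκ).toLinearMap) := by
  refine ⟨hH.1.comp (LinearEquiv.funCongrLeft R R eκ).surjective, ?_⟩
  ext x
  rw [LinearMap.mem_ker, LinearMap.comp_apply, ← LinearMap.mem_ker, hH.2]
  simp only [LinearMap.mem_range, vecMulLinear_apply, reindex_apply, submatrix_vecMul_equiv,
    LinearEquiv.coe_coe, LinearEquiv.funCongrLeft_apply]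
  constructor
  · rintro ⟨y, hy⟩
    refine ⟨y ∘ eι.symm, ?_⟩
    rw [show (y ∘ eι.symm) ∘ eι.symm.symm = y by ext; simp, hy]
    ext k
    simp [LinearMap.funLeft_apply]
  · rintro ⟨y, rfl⟩
    exact ⟨y ∘ eι, by ext k; simp⟩

theorem Presents.fromBlocks_zero₁₂ {f : M₁ →ₗ[R] M₂} {g : M₂ →ₗ[R] M₃}
    (hf : Function.Injective f) (hexact : LinearMap.range f = LinearMap.ker g)
    {H₁ : Matrix ι₁ κ₁ R} {π₁ : (κ₁ → R) →ₗ[R] M₁} (hH₁ : H₁.Presents π₁)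
    {H₃ : Matrix ι₃ κ₃ R} {π₃ : (κ₃ → R) →ₗ[R] M₃} (hH₃ : H₃.Presents π₃)
    {s : (κ₃ → R) →ₗ[R] M₂} (hs : g ∘ₗ s = π₃) {C : Matrix ι₃ κ₁ R}
    (hC : ∀ t, f (π₁ (t ᵥ* C)) + s (t ᵥ* H₃) = 0) :
    (fromBlocks H₁ 0 C H₃).Presents
      (f ∘ₗ π₁ ∘ₗ LinearMap.funLeft R R Sum.inl + s ∘ₗ LinearMap.funLeft R R Sum.inr) := by
  have hgf : ∀ x, g (f x) = 0 := fun x =>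
    (hexact ▸ LinearMap.mem_range_self f x : f x ∈ LinearMap.ker g)
  have hgs : ∀ y, g (s y) = π₃ y := fun y => congrArg (· y) hs
  refine ⟨fun m₂ => ?_, le_antisymm (fun z hz => ?_) ?_⟩
  · obtain ⟨y, hy⟩ := hH₃.1 (g m₂)
    obtain ⟨m₁, hm₁⟩ : m₂ - s y ∈ LinearMap.range f := by
      rw [hexact, LinearMap.mem_ker, map_sub, hgs, hy, sub_self]
    obtain ⟨x, rfl⟩ := hH₁.1 m₁
    refine ⟨Sum.elim x y, ?_⟩
    change f (π₁ x) + s y = m₂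
    rw [hm₁, sub_add_cancel]
  · replace hz : f (π₁ (z ∘ Sum.inl)) + s (z ∘ Sum.inr) = 0 := hz
    obtain ⟨t, ht⟩ : z ∘ Sum.inr ∈ LinearMap.range H₃.vecMulLinear := by
      rw [← hH₃.2, LinearMap.mem_ker, ← hgs]
      simpa only [map_add, hgf, zero_add, map_zero] using congrArg g hz
    rw [vecMulLinear_apply] at ht
    obtain ⟨u, hu⟩ : z ∘ Sum.inl - t ᵥ* C ∈ LinearMap.range H₁.vecMulLinear := by
      rw [← hH₁.2, LinearMap.mem_ker]
      apply hf
      have htC := hC t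
      rw [ht] at htC
      rw [map_zero, map_sub, map_sub, sub_eq_zero, eq_neg_of_add_eq_zero_left hz,
        eq_neg_of_add_eq_zero_left htC]
    rw [vecMulLinear_apply] at hu
    refine ⟨Sum.elim u t, ?_⟩
    rw [vecMulLinear_apply, vecMul_fromBlocks]
    simp only [Sum.elim_comp_inl, Sum.elim_comp_inr, vecMul_zero, zero_add]
    rw [hu, ht, sub_add_cancel, Sum.elim_comp_inl_inr]
  · rintro _ ⟨y, rfl⟩
    rw [LinearMap.mem_ker, vecMulLinear_apply, vecMul_fromBlocks]
    change f (π₁ (_ + _)) + s (_ + _) = 0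
    simpa only [vecMul_zero, zero_add, map_add, hH₁.map_vecMul] using hC _

theorem Presents.exists_fromBlocks {f : M₁ →ₗ[R] M₂} {g : M₂ →ₗ[R] M₃}
    (hf : Function.Injective f) (hexact : LinearMap.range f = LinearMap.ker g)
    {H₁ : Matrix ι₁ κ₁ R} {π₁ : (κ₁ → R) →ₗ[R] M₁} (hH₁ : H₁.Presents π₁)
    {H₃ : Matrix ι₃ κ₃ R} {π₃ : (κ₃ → R) →ₗ[R] M₃} (hH₃ : H₃.Presents π₃)
    {s : (κ₃ → R) →ₗ[R] M₂} (hs : g ∘ₗ s = π₃) :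
    ∃ C : Matrix ι₃ κ₁ R, (fromBlocks H₁ 0 C H₃).Presents
      (f ∘ₗ π₁ ∘ₗ LinearMap.funLeft R R Sum.inl + s ∘ₗ LinearMap.funLeft R R Sum.inr) := by
  classical
  have hlift : ∀ i, ∃ c, f (π₁ c) + s (H₃ i) = 0 := fun i => by
    obtain ⟨m, hm⟩ : -s (H₃ i) ∈ LinearMap.range f := by
      rw [hexact, LinearMap.mem_ker, map_neg, ← LinearMap.comp_apply, hs, hH₃.map_row, neg_zero]
    obtain ⟨c, rfl⟩ := hH₁.1 m
    exact ⟨c, by rw [hm, neg_add_cancel]⟩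
  choose C hC using hlift
  refine ⟨Matrix.of C, hH₁.fromBlocks_zero₁₂ hf hexact hH₃ hs fun t => ?_⟩
  simp only [vecMul_eq_sum, map_sum, map_smul, ← Finset.sum_add_distrib]
  exact Finset.sum_eq_zero fun i _ => by
    rw [← smul_add, show f (π₁ (of C i)) + _ = 0 from hC i, smul_zero]

theorem presents_one_zero {n : Type*} [Fintype n] [DecidableEq n] :
    (1 : Matrix n n R).Presents (0 : (n → R) →ₗ[R] Unit) := by
  refine ⟨fun _ => ⟨0, rfl⟩, ?_⟩
  rw [LinearMap.ker_zero, eq_comm, LinearMap.range_eq_top]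
  exact fun v => ⟨v, vecMul_one v⟩

theorem Presents.maxMinorsIdeal_eq [Fintype κ] [DecidableEq κ] [Fintype κ'] [DecidableEq κ']
    {H : Matrix ι κ R} {π : (κ → R) →ₗ[R] M} {H' : Matrix ι' κ' R} {π' : (κ' → R) →ₗ[R] M}
    (hH : H.Presents π) (hH' : H'.Presents π') : H.maxMinorsIdeal = H'.maxMinorsIdeal := by
  have hexact : LinearMap.range (LinearMap.id : M →ₗ[R] M) = LinearMap.ker (0 : M →ₗ[R] Unit) := by
    rw [LinearMap.range_id, LinearMap.ker_zero]
  obtain ⟨C, hC⟩ := hH.exists_fromBlocks Function.injective_id hexact presents_one_zero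
    (LinearMap.zero_comp π')
  obtain ⟨C', hC'⟩ := hH'.exists_fromBlocks Function.injective_id hexact presents_one_zero
    (LinearMap.zero_comp π)
  have hswap := hC'.reindex (Equiv.refl _) (Equiv.sumComm κ' κ)
  have hmap : (LinearMap.id ∘ₗ π' ∘ₗ LinearMap.funLeft R R Sum.inl +
        π ∘ₗ LinearMap.funLeft R R Sum.inr) ∘ₗ
        (LinearEquiv.funCongrLeft R R (Equiv.sumComm κ' κ)).toLinearMap =
      LinearMap.id ∘ₗ π ∘ₗ LinearMap.funLeft R R Sum.inl + π' ∘ₗ LinearMap.funLeft R R Sum.inr :=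
    LinearMap.ext fun _ => add_comm _ _
  rw [hmap] at hswap
  calc H.maxMinorsIdeal = (fromBlocks H 0 C 1).maxMinorsIdeal := by
        rw [maxMinorsIdeal_fromBlocks_zero₁₂, maxMinorsIdeal_one, Ideal.mul_top]
    _ = _ := maxMinorsIdeal_eq_of_range_vecMulLinear_eq (hC.2.symm.trans hswap.2)
    _ = (fromBlocks H' 0 C' 1).maxMinorsIdeal := maxMinorsIdeal_reindex _ _ _
    _ = H'.maxMinorsIdeal := by
        rw [maxMinorsIdeal_fromBlocks_zero₁₂, maxMinorsIdeal_one, Ideal.mul_top]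

end Presentations

end Matrix

theorem Module.FinitePresentation.exists_matrix_presents (R M : Type*) [CommRing R]
    [AddCommGroup M] [Module R M] [Module.FinitePresentation R M] :
    ∃ (a b : ℕ) (H : Matrix (Fin a) (Fin b) R) (π : (Fin b → R) →ₗ[R] M), H.Presents π := by
  obtain ⟨b, π, hπ⟩ := Module.Finite.exists_fin' R M
  obtain ⟨a, H, hH⟩ := Submodule.fg_iff_exists_fin_generating_family.mp
    (Module.FinitePresentation.fg_ker π hπ)
  exact ⟨a, b, Matrix.of H, π, hπ, by rw [range_vecMulLinear, ← hH]; rfl⟩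

theorem fitIdeal_eq_maxMinorsIdeal {R M ι κ : Type*} [CommRing R] [AddCommGroup M] [Module R M]
    [Fintype ι] [Fintype κ] [DecidableEq κ] {H : Matrix ι κ R} {π : (κ → R) →ₗ[R] M}
    (hH : H.Presents π) : fitIdeal R M = H.maxMinorsIdeal := by
  -- `IsPresentation` and `minorsIdeal` are `Presents` and `maxMinorsIdeal` at `Fin` indices.
  refine le_antisymm (iSup₂_le fun a b => iSup₂_le fun H' π' => iSup_le fun hH' =>
    (Matrix.Presents.maxMinorsIdeal_eq hH' hH).le) ?_
  rw [← H.maxMinorsIdeal_reindex (Fintype.equivFin ι) (Fintype.equivFin κ)]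
  exact le_iSup₂_of_le _ _ (le_iSup₂_of_le _ _ (le_iSup_of_le (hH.reindex _ _) le_rfl))

theorem fitIdeal_mul_eq_of_shortExact_of_quadratic_general (R : Type*) [CommRing R]
    (M₁ M₂ M₃ : Type*) [AddCommGroup M₁] [AddCommGroup M₂] [AddCommGroup M₃]
    [Module R M₁] [Module R M₂] [Module R M₃]
    [Module.FinitePresentation R M₁]
    (f : M₁ →ₗ[R] M₂) (g : M₂ →ₗ[R] M₃)
    (hf : Function.Injective f) (hg : Function.Surjective g)
    (hexact : LinearMap.range f = LinearMap.ker g)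
    (hquad : ∃ (k : ℕ) (H : Matrix (Fin k) (Fin k) R) (π : (Fin k → R) →ₗ[R] M₃),
      IsPresentation R H M₃ π) :
    fitIdeal R M₁ * fitIdeal R M₃ = fitIdeal R M₂ := by
  obtain ⟨a, b, H₁, π₁, hH₁⟩ := Module.FinitePresentation.exists_matrix_presents R M₁
  obtain ⟨k, H₃, π₃, hH₃⟩ := hquad
  obtain ⟨s, hs⟩ := Module.projective_lifting_property g π₃ hg
  obtain ⟨C, hH₂⟩ := hH₁.exists_fromBlocks hf hexact (H₃ := H₃) hH₃ hs
  rw [fitIdeal_eq_maxMinorsIdeal hH₁, fitIdeal_eq_maxMinorsIdeal (H := H₃) hH₃,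
    fitIdeal_eq_maxMinorsIdeal hH₂, Matrix.maxMinorsIdeal_fromBlocks_zero₁₂]

/-- If `0 → M₁ → M₂ → M₃ → 0` is a short exact sequence of finitely presented
`R`-modules and `M₃` admits a quadratic presentation `R^k --h--> R^k ->> M₃`
(with `h` not required to be injective), then `Fit_R(M₁) · Fit_R(M₃) = Fit_R(M₂)`. -/
theorem fitIdeal_mul_eq_of_shortExact_of_quadratic (R : Type*) [CommRing R]
    (M₁ M₂ M₃ : Type*) [AddCommGroup M₁] [AddCommGroup M₂] [AddCommGroup M₃]
    [Module R M₁] [Module R M₂] [Module R M₃]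
    [Module.FinitePresentation R M₁] [Module.FinitePresentation R M₂]
    [Module.FinitePresentation R M₃]
    (f : M₁ →ₗ[R] M₂) (g : M₂ →ₗ[R] M₃)
    (hf : Function.Injective f) (hg : Function.Surjective g)
    (hexact : LinearMap.range f = LinearMap.ker g)
    (hquad : ∃ (k : ℕ) (H : Matrix (Fin k) (Fin k) R) (π : (Fin k → R) →ₗ[R] M₃),
      IsPresentation R H M₃ π) :
    fitIdeal R M₁ * fitIdeal R M₃ = fitIdeal R M₂ :=
  fitIdeal_mul_eq_of_shortExact_of_quadratic_general R M₁ M₂ M₃ f g hf hg hexact hquad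
end

section
/- Let R be a commutative ring, n ≥ 1, Λ = M_{n×n}(R), and M a finitely presented Λ-module. For a finite presentation Λ^a --h--> Λ^b ->> M with a ≥ b, let H ∈ M_{a×b}(Λ) be the matrix of h, and for each b×b submatrix T of H let T̃ ∈ M_{nb×nb}(R) denote T read as a block matrix over R; write Fit_Λ(h) := ⟨det(T̃) : T a b×b submatrix of H⟩_R. Then: (a) Fit_Λ(h) ⊆ Fit_R(e_{11}M) for every such presentation h; and (b) Fit_R(e_{11}M) equals the supremum (sum) of the ideals Fit_Λ(h) as h ranges over all finite presentations of M with a ≥ b. In particular the maximal Fitting invariant of M over Λ equals Fit_Λ(M) = Fit_R(e_{11}M). -/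
open Matrix

/-- Right multiplication of row vectors by a matrix over a (possibly noncommutative)
ring, as a homomorphism of left modules. -/
def ncVecMulLinear {L : Type*} [Ring L] {a b : ℕ} (H : Matrix (Fin a) (Fin b) L) :
    (Fin a → L) →ₗ[L] (Fin b → L) where
  toFun v := fun j => ∑ k, v k * H k j
  map_add' v w := by funext j; simp [add_mul, Finset.sum_add_distrib]
  map_smul' c v := by funext j; simp [Finset.mul_sum, mul_assoc]

/-- `(H, π)` is a finite presentation `L^a --H--> L^b --π->> M` of the left `L`-module `M`,
where `H` acts by right multiplication on row vectors. -/
def IsNCPresentation {L : Type*} [Ring L] {a b : ℕ} (H : Matrix (Fin a) (Fin b) L)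
    (M : Type*) [AddCommGroup M] [Module L M] (π : (Fin b → L) →ₗ[L] M) : Prop :=
  Function.Surjective π ∧ LinearMap.ker π = LinearMap.range (ncVecMulLinear H)

/-- The Fitting invariant `Fit_Λ(h)` of a presentation matrix `H ∈ M_{a×b}(Λ)` over
`Λ = M_{n×n}(R)`: the `R`-ideal generated by the determinants of the `b×b` submatrices
of `H` read as `nb×nb` matrices over `R` (the reduced norms of the submatrices). -/
noncomputable def lamFit (n : ℕ) (R : Type*) [CommRing R] {a b : ℕ}
    (H : Matrix (Fin a) (Fin b) (Matrix (Fin n) (Fin n) R)) : Ideal R :=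
  Ideal.span {r : R | ∃ f : Fin b → Fin a,
    r = Matrix.det (Matrix.of fun p q : Fin b × Fin n => (H (f p.1) q.1) p.2 q.2)}

/-!
Write `E = e_{zz}`. Reading off row `z` identifies `E • Λ^b` with `R^{b×n}`, and under this
identification right multiplication by `H ∈ M_{a×b}(Λ)` becomes right multiplication by the
block matrix `H̃ ∈ M_{na×nb}(R)`. Hence a `Λ`-presentation `H` of `M` yields the `R`-presentation
`H̃` of `E M`, and the generators of `Fit_Λ(H)` are maximal minors of `H̃`.

Conversely, let `G` present `E M` over `R` with generators `m_j`. The map `Λ^b → M`,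
`x ↦ ∑ x_j m_j`, is onto because `m = ∑_s e_{sz} e_{zs} m`, and `x` lies in its kernel iff for
every `s` the vector `(x_j(s, z))_j` lies in `ker = rowspace G`; so the kernel is spanned by the rows `G_i E` and
`(1 - E) e_k`. Replacing the latter by `G_{g k} E + (1 - E) e_k` gives a `Λ`-presentation
containing a `b × b` submatrix whose block matrix is block diagonal with blocks `G.submatrix g id`
and identities, so every maximal minor of `G` lies in some `Fit_Λ(h)`.
-/

section

variable {R : Type*} [CommRing R]

section Presentation

variable {M : Type*} [AddCommGroup M] [Module R M]

theorem apply_eq_sum_smul_apply_single {ι : Type*} [Fintype ι] [DecidableEq ι]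
    (φ : (ι → R) →ₗ[R] M) (y : ι → R) : φ y = ∑ j, y j • φ (Pi.single j 1) := by
  simp only [← map_smul, ← map_sum]
  congr 1
  ext i
  simp [Pi.single_apply]

theorem minorsIdeal_le_fitIdeal {a b : ℕ} {H : Matrix (Fin a) (Fin b) R}
    {π : (Fin b → R) →ₗ[R] M} (hπ : IsPresentation R H M π) :
    minorsIdeal R H ≤ fitIdeal R M :=
  le_iSup_of_le a <| le_iSup_of_le b <| le_iSup_of_le H <| le_iSup_of_le π <|
    le_iSup_of_le hπ le_rfl

theorem det_submatrix_mem_fitIdeal {κ ι : Type*} [Fintype κ] [Fintype ι] [DecidableEq ι]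
    (A : Matrix κ ι R) (π : (ι → R) →ₗ[R] M) (hπ : Function.Surjective π)
    (hker : LinearMap.ker π = LinearMap.range A.vecMulLinear) (f : ι → κ) :
    (A.submatrix f id).det ∈ fitIdeal R M := by
  let ea := (Fintype.equivFin κ).symm
  let eb := (Fintype.equivFin ι).symm
  let e : (Fin (Fintype.card ι) → R) ≃ₗ[R] (ι → R) := LinearEquiv.funCongrLeft R R eb.symm
  have hpres : IsPresentation R (A.submatrix ea eb) M (π ∘ₗ e.toLinearMap) := by
    refine ⟨hπ.comp e.surjective, ?_⟩
    ext x
    rw [LinearMap.ker_comp, hker]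
    constructor
    · rintro ⟨w, hw⟩
      refine ⟨w ∘ ea, ?_⟩
      have hw' : w ᵥ* A = x ∘ eb.symm := hw
      simp [submatrix_vecMul_equiv, Function.comp_assoc, hw']
    · rintro ⟨w, rfl⟩
      exact ⟨w ∘ ea.symm, by ext; simp [submatrix_vecMul_equiv, e]⟩
  have hminor : (A.submatrix f id).det =
      ((A.submatrix ea eb).submatrix (ea.symm ∘ f ∘ eb) id).det := by
    rw [submatrix_submatrix, ← det_submatrix_equiv_self eb (A.submatrix f id)]
    congr 1
    ext i j
    simp
  exact hminor ▸ minorsIdeal_le_fitIdeal hpres (Ideal.subset_span ⟨_, rfl⟩)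

end Presentation

theorem range_ncVecMulLinear {L : Type*} [Ring L] {a b : ℕ} (H : Matrix (Fin a) (Fin b) L) :
    LinearMap.range (ncVecMulLinear H) = Submodule.span L (Set.range H) := by
  apply le_antisymm
  · rintro _ ⟨w, rfl⟩
    have hw : ncVecMulLinear H w = ∑ i, w i • H i := by
      ext j
      simp [ncVecMulLinear, Finset.sum_apply]
    rw [hw]
    exact Submodule.sum_mem _ fun i _ => Submodule.smul_mem _ _ (Submodule.subset_span ⟨i, rfl⟩)
  · rw [Submodule.span_le]
    rintro _ ⟨i, rfl⟩
    refine ⟨Pi.single i 1, ?_⟩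
    ext j
    simp [ncVecMulLinear, Pi.single_apply]

section MatrixUnits

variable {n : ℕ}

theorem sum_single_self_one : ∑ s : Fin n, single s s (1 : R) = 1 := by
  ext p q
  rw [Matrix.sum_apply, Finset.sum_eq_single p
    (fun s _ hs => single_apply_of_row_ne hs _ _ _) (by simp)]
  by_cases h : p = q
  · subst h; simp
  · simp [h]

theorem mul_single_self_eq_sum (z : Fin n) (A : Matrix (Fin n) (Fin n) R) :
    A * single z z (1 : R) = ∑ s, A s z • single s z (1 : R) := by
  ext p q
  rw [Matrix.sum_apply, Finset.sum_eq_single p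
    (fun s _ hs => by simp [single_apply_of_row_ne hs]) (by simp)]
  by_cases hq : q = z
  · subst hq; simp
  · simp [hq, Ne.symm hq]

end MatrixUnits

section MatrixModule

variable {n : ℕ} (z : Fin n) {M : Type*} [AddCommGroup M]
  [Module (Matrix (Fin n) (Fin n) R) M] [Module R M]
  [IsScalarTower R (Matrix (Fin n) (Fin n) R) M] {ι : Type*}

local notation "Λ" => Matrix (Fin n) (Fin n) R

theorem single_smul_of_mem_eComponent {m : M} (hm : m ∈ eComponent n R M z) :
    single z z (1 : R) • m = m := by
  obtain ⟨x, rfl⟩ := hm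
  simp [eMul, smul_smul]

def rowAt (y : ι → Λ) : ι × Fin n → R := fun p => y p.1 z p.2

def rowEmbed : (ι × Fin n → R) →ₗ[R] (ι → Λ) where
  toFun u j := of fun s t => if s = z then u (j, t) else 0
  map_add' u v := by ext j s t; by_cases hs : s = z <;> simp [hs]
  map_smul' r u := by ext; simp

@[simp]
theorem rowEmbed_apply (u : ι × Fin n → R) (j : ι) (s t : Fin n) :
    rowEmbed z u j s t = if s = z then u (j, t) else 0 := rfl

@[simp]
theorem rowAt_rowEmbed (u : ι × Fin n → R) : rowAt z (rowEmbed z u) = u := by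
  ext; simp [rowAt]

theorem rowEmbed_rowAt (y : ι → Λ) : rowEmbed z (rowAt z y) = single z z (1 : R) • y := by
  ext j s t
  by_cases hs : s = z
  · subst hs; simp [rowAt]
  · simp [hs, single_mul_apply_of_ne _ _ _ _ _ hs]

theorem single_smul_rowEmbed (u : ι × Fin n → R) :
    single z z (1 : R) • rowEmbed z u = rowEmbed z u := by
  rw [← rowEmbed_rowAt, rowAt_rowEmbed]

theorem rowAt_ncVecMulLinear {a b : ℕ} (H : Matrix (Fin a) (Fin b) Λ) (c : Fin a → Λ) :
    rowAt z (ncVecMulLinear H c) = rowAt z c ᵥ* comp _ _ _ _ R H := by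
  ext ⟨j, t⟩
  simp [rowAt, ncVecMulLinear, vecMul, dotProduct, Fintype.sum_prod_type, Matrix.sum_apply,
    Matrix.mul_apply]

noncomputable def rowPresentation (π : (ι → Λ) →ₗ[Λ] M) :
    (ι × Fin n → R) →ₗ[R] eComponent n R M z :=
  LinearMap.codRestrict _ (π.restrictScalars R ∘ₗ rowEmbed z) fun u =>
    ⟨π (rowEmbed z u), by simp [eMul, ← map_smul, single_smul_rowEmbed]⟩

theorem rowPresentation_surjective {π : (ι → Λ) →ₗ[Λ] M} (hπ : Function.Surjective π) :
    Function.Surjective (rowPresentation z π) := by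
  rintro ⟨_, x, rfl⟩
  obtain ⟨y, rfl⟩ := hπ x
  refine ⟨rowAt z y, Subtype.ext ?_⟩
  change π (rowEmbed z (rowAt z y)) = _
  rw [rowEmbed_rowAt, map_smul]
  rfl

theorem ker_rowPresentation {a b : ℕ} {H : Matrix (Fin a) (Fin b) Λ}
    {π : (Fin b → Λ) →ₗ[Λ] M} (hπ : IsNCPresentation H M π) :
    LinearMap.ker (rowPresentation z π) = LinearMap.range (comp _ _ _ _ R H).vecMulLinear := by
  ext u
  have hker : u ∈ LinearMap.ker (rowPresentation z π) ↔
      rowEmbed z u ∈ LinearMap.range (ncVecMulLinear H) := by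
    rw [LinearMap.mem_ker, ← hπ.2, LinearMap.mem_ker, ← Submodule.coe_eq_zero]
    rfl
  rw [hker]
  constructor
  · rintro ⟨c, hc⟩
    exact ⟨rowAt z c, by simp [← rowAt_ncVecMulLinear, hc]⟩
  · rintro ⟨w, rfl⟩
    have hw : w ᵥ* comp _ _ _ _ R H = rowAt z (ncVecMulLinear H (rowEmbed z w)) := by
      rw [rowAt_ncVecMulLinear, rowAt_rowEmbed]
    rw [vecMulLinear_apply, hw, rowEmbed_rowAt]
    exact Submodule.smul_mem _ _ ⟨_, rfl⟩

theorem lamFit_le_fitIdeal {a b : ℕ} (H : Matrix (Fin a) (Fin b) Λ)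
    (π : (Fin b → Λ) →ₗ[Λ] M) (hπ : IsNCPresentation H M π) :
    lamFit n R H ≤ fitIdeal R (eComponent n R M z) := by
  rw [lamFit, Ideal.span_le]
  rintro _ ⟨f, rfl⟩
  exact det_submatrix_mem_fitIdeal (comp _ _ _ _ R H) (rowPresentation z π)
    (rowPresentation_surjective z hπ.1) (ker_rowPresentation z hπ) (Prod.map f id)

def colAt (s : Fin n) : (ι → Λ) →ₗ[R] (ι → R) where
  toFun x j := x j s z
  map_add' _ _ := rfl
  map_smul' _ _ := rfl

def liftRow : (ι → R) →ₗ[R] (ι → Λ) where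
  toFun v j := v j • single z z (1 : R)
  map_add' v w := by ext1 j; simp [add_smul]
  map_smul' r v := by ext1 j; simp

@[simp]
theorem colAt_apply (s : Fin n) (x : ι → Λ) (j : ι) : colAt z s x j = x j s z := rfl

@[simp]
theorem liftRow_apply (v : ι → R) (j : ι) : liftRow z v j = v j • single z z (1 : R) := rfl

@[simp]
theorem colAt_liftRow (s : Fin n) (v : ι → R) :
    colAt z s (liftRow z v) = single z z (1 : R) s z • v := by
  ext j
  by_cases hs : s = z
  · subst hs; simp
  · simp [Ne.symm hs]

@[simp]
theorem colAt_smul_liftRow (s : Fin n) (A : Λ) (v : ι → R) :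
    colAt z s (A • liftRow z v) = A s z • v := by
  ext j
  simp

variable [DecidableEq ι] {κ : Type*}

def liftedRelations (G : Matrix κ ι R) (g : ι → κ) : ι ⊕ κ → (ι → Λ) :=
  Sum.elim (fun k => liftRow z (G (g k)) + Pi.single k (1 - single z z (1 : R)))
    fun i => liftRow z (G i)

@[simp]
theorem colAt_single_one_sub_single (s : Fin n) (k : ι) :
    colAt z s (Pi.single k (1 - single z z (1 : R))) = 0 := by
  have hz : (1 - single z z (1 : R)) s z = 0 := by
    by_cases hs : s = z
    · subst hs; simp
    · simp [hs, Ne.symm hs]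
  ext j
  by_cases hj : j = k
  · subst hj; simp [hz]
  · simp [hj]

theorem comp_liftedRelations_inl (G : Matrix κ ι R) (g : ι → κ) :
    comp ι ι (Fin n) (Fin n) R (of fun k => liftedRelations z G g (Sum.inl k)) =
      blockDiagonal fun p => if p = z then G.submatrix g id else 1 := by
  ext ⟨k, p⟩ ⟨j, q⟩
  simp only [liftedRelations, comp_apply, of_apply, Sum.elim_inl, Matrix.add_apply,
    Pi.add_apply, liftRow_apply, blockDiagonal_apply', Pi.single_apply,
    apply_ite (fun A : Λ => A p q), apply_ite (fun A : Matrix ι ι R => A k j),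
    Matrix.smul_apply, Matrix.sub_apply, Matrix.zero_apply, submatrix_apply, id,
    single_apply, Matrix.one_apply, smul_eq_mul]
  split_ifs <;> grind

variable [Fintype ι]

theorem det_comp_liftedRelations_inl (G : Matrix κ ι R) (g : ι → κ) :
    (comp ι ι (Fin n) (Fin n) R (of fun k => liftedRelations z G g (Sum.inl k))).det =
      (G.submatrix g id).det := by
  rw [comp_liftedRelations_inl, det_blockDiagonal]
  simp [apply_ite det]

theorem eq_sum_single_smul_liftRow_add (x : ι → Λ) :
    x = ∑ s, single s z (1 : R) • liftRow z (colAt z s x) +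
      ∑ k, x k • Pi.single k (1 - single z z (1 : R)) := by
  ext1 j
  simp only [Pi.add_apply, Finset.sum_apply, Pi.smul_apply, liftRow_apply, colAt_apply, smul_single,
    smul_eq_mul, mul_one, single_mul_single_same, Pi.single_apply, mul_ite, mul_zero,
    Finset.sum_ite_eq, Finset.mem_univ, if_true]
  rw [mul_sub, mul_one, mul_single_self_eq_sum]
  simp

noncomputable def matrixLift (φ : (ι → R) →ₗ[R] eComponent n R M z) :
    (ι → Λ) →ₗ[Λ] M :=
  Fintype.linearCombination Λ fun j => (φ (Pi.single j 1) : M)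

variable (φ : (ι → R) →ₗ[R] eComponent n R M z)

theorem matrixLift_apply (x : ι → Λ) :
    matrixLift z φ x = ∑ s, single s z (1 : R) • (φ (colAt z s x) : M) := by
  have hfix (j : ι) : single z z (1 : R) • (φ (Pi.single j 1) : M) = φ (Pi.single j 1) :=
    single_smul_of_mem_eComponent z (φ _).2
  calc matrixLift z φ x
      = ∑ j, (x j * single z z (1 : R)) • (φ (Pi.single j 1) : M) := by
        simp only [matrixLift, Fintype.linearCombination_apply, mul_smul, hfix]
    _ = ∑ j, ∑ s, x j s z • single s z (1 : R) • (φ (Pi.single j 1) : M) := by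
        simp only [mul_single_self_eq_sum, Finset.sum_smul, smul_assoc]
    _ = ∑ s, single s z (1 : R) • (φ (colAt z s x) : M) := by
        rw [Finset.sum_comm]
        refine Finset.sum_congr rfl fun s _ => ?_
        change _ = single s z (1 : R) • ((eComponent n R M z).subtype ∘ₗ φ) (colAt z s x)
        rw [apply_eq_sum_smul_apply_single, Finset.smul_sum]
        exact Finset.sum_congr rfl fun j _ => smul_comm _ _ _

theorem single_smul_matrixLift (s : Fin n) (x : ι → Λ) :
    single z s (1 : R) • matrixLift z φ x = φ (colAt z s x) := by
  rw [matrixLift_apply, Finset.smul_sum, Finset.sum_eq_single s]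
  · rw [smul_smul, single_mul_single_same, one_mul]
    exact single_smul_of_mem_eComponent z (φ _).2
  · intro t _ hts
    rw [smul_smul, single_mul_single_of_ne _ _ _ _ hts.symm, zero_smul]
  · simp

theorem matrixLift_eq_zero_iff (x : ι → Λ) :
    matrixLift z φ x = 0 ↔ ∀ s, colAt z s x ∈ LinearMap.ker φ := by
  refine ⟨fun h s => ?_, fun h => ?_⟩
  · rw [LinearMap.mem_ker, ← Submodule.coe_eq_zero, ← single_smul_matrixLift, h, smul_zero]
  · simp_all [matrixLift_apply]

theorem matrixLift_surjective (hφ : Function.Surjective φ) :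
    Function.Surjective (matrixLift z φ) := by
  intro m
  have hmem (s : Fin n) : single z s (1 : R) • m ∈ eComponent n R M z := by
    refine ⟨single z s (1 : R) • m, ?_⟩
    change single z z (1 : R) • single z s (1 : R) • m = _
    rw [smul_smul, single_mul_single_same, one_mul]
  choose y hy using fun s => hφ ⟨_, hmem s⟩
  refine ⟨∑ s, single s z (1 : R) • liftRow z (y s), ?_⟩
  have hcol (t : Fin n) : colAt z t (∑ s, single s z (1 : R) • liftRow z (y s)) = y t := by
    simp [map_sum, single_apply]
  simp only [matrixLift_apply, hcol, hy, smul_smul, single_mul_single_same, one_mul]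
  rw [← Finset.sum_smul, sum_single_self_one, one_smul]

variable {φ} in
theorem ker_matrixLift [Fintype κ] {G : Matrix κ ι R}
    (hker : LinearMap.ker φ = LinearMap.range G.vecMulLinear) (g : ι → κ) :
    LinearMap.ker (matrixLift z φ) = Submodule.span Λ (Set.range (liftedRelations z G g)) := by
  classical
  have hrow (i : κ) : G i ∈ LinearMap.range G.vecMulLinear := ⟨Pi.single i 1, by ext; simp⟩
  apply le_antisymm
  · intro x hx
    rw [LinearMap.mem_ker, matrixLift_eq_zero_iff, hker] at hx
    choose w hw using hx
    have hlift (i : κ) :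
        liftRow z (G i) ∈ Submodule.span Λ (Set.range (liftedRelations z G g)) :=
      Submodule.subset_span ⟨Sum.inr i, rfl⟩
    have hunit (k : ι) : Pi.single k (1 - single z z (1 : R)) ∈
        Submodule.span Λ (Set.range (liftedRelations z G g)) := by
      simpa [liftedRelations] using
        sub_mem (Submodule.subset_span (Set.mem_range_self (Sum.inl k))) (hlift (g k))
    rw [eq_sum_single_smul_liftRow_add z x]
    refine add_mem (Submodule.sum_mem _ fun s _ => Submodule.smul_mem _ _ ?_)
      (Submodule.sum_mem _ fun k _ => Submodule.smul_mem _ _ (hunit k))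
    rw [← hw s, vecMulLinear_apply, vecMul_eq_sum, map_sum]
    exact Submodule.sum_mem _ fun i _ => by
      rw [map_smul]; exact Submodule.smul_of_tower_mem _ _ (hlift i)
  · rw [Submodule.span_le]
    rintro _ ⟨k | i, rfl⟩ <;>
      rw [SetLike.mem_coe, LinearMap.mem_ker, matrixLift_eq_zero_iff, hker] <;> intro s <;>
      simp only [liftedRelations, Sum.elim_inl, Sum.elim_inr, map_add, colAt_liftRow,
        colAt_single_one_sub_single, add_zero] <;>
      exact Submodule.smul_mem _ _ (hrow _)

theorem fitIdeal_eComponent_le_iSup_lamFit :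
    fitIdeal R (eComponent n R M z) ≤
      ⨆ (a : ℕ) (b : ℕ) (_ : b ≤ a) (H : Matrix (Fin a) (Fin b) Λ)
        (π : (Fin b → Λ) →ₗ[Λ] M) (_ : IsNCPresentation H M π), lamFit n R H := by
  refine iSup_le fun a => iSup_le fun b => iSup_le fun G => iSup_le fun φ =>
    iSup_le fun hφ => ?_
  rw [minorsIdeal, Ideal.span_le]
  rintro _ ⟨g, rfl⟩
  let e : Fin (b + a) ≃ Fin b ⊕ Fin a := finSumFinEquiv.symm
  let Hg : Matrix (Fin (b + a)) (Fin b) Λ := of fun i => liftedRelations z G g (e i)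
  have hpres : IsNCPresentation Hg M (matrixLift z φ) := by
    refine ⟨matrixLift_surjective z φ hφ.1, ?_⟩
    rw [range_ncVecMulLinear, ker_matrixLift z hφ.2 g]
    exact congrArg _ (e.surjective.range_comp _).symm
  have hle : lamFit n R Hg ≤ ⨆ (a : ℕ) (b : ℕ) (_ : b ≤ a) (H : Matrix (Fin a) (Fin b) Λ)
      (π : (Fin b → Λ) →ₗ[Λ] M) (_ : IsNCPresentation H M π), lamFit n R H :=
    le_iSup_of_le (b + a) <| le_iSup_of_le b <| le_iSup_of_le (Nat.le_add_right b a) <|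
      le_iSup_of_le Hg <| le_iSup_of_le _ <| le_iSup_of_le hpres le_rfl
  refine hle (Ideal.subset_span ⟨fun k => e.symm (Sum.inl k), ?_⟩)
  rw [← det_comp_liftedRelations_inl z G g]
  congr 1
  ext
  simp [Hg, e]

end MatrixModule

end

theorem lamFit_le_and_iSup_eq_general (n : ℕ) (hn : 0 < n) (R : Type*) [CommRing R] (M : Type*)
    [AddCommGroup M] [Module (Matrix (Fin n) (Fin n) R) M] [Module R M]
    [IsScalarTower R (Matrix (Fin n) (Fin n) R) M] :
    (∀ (a b : ℕ), b ≤ a → ∀ (H : Matrix (Fin a) (Fin b) (Matrix (Fin n) (Fin n) R))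
      (π : (Fin b → Matrix (Fin n) (Fin n) R) →ₗ[Matrix (Fin n) (Fin n) R] M),
      IsNCPresentation H M π → lamFit n R H ≤ fitIdeal R (eComponent n R M ⟨0, hn⟩)) ∧
    fitIdeal R (eComponent n R M ⟨0, hn⟩) =
      ⨆ (a : ℕ) (b : ℕ) (_ : b ≤ a) (H : Matrix (Fin a) (Fin b) (Matrix (Fin n) (Fin n) R))
        (π : (Fin b → Matrix (Fin n) (Fin n) R) →ₗ[Matrix (Fin n) (Fin n) R] M)
        (_ : IsNCPresentation H M π), lamFit n R H :=
  ⟨fun _ _ _ H π hπ => lamFit_le_fitIdeal _ H π hπ,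
    le_antisymm (fitIdeal_eComponent_le_iSup_lamFit _) <|
      iSup₂_le fun _ _ => iSup₂_le fun _ H => iSup₂_le fun π hπ =>
        lamFit_le_fitIdeal _ H π hπ⟩

/-- For a finitely presented module `M` over `Λ = M_{n×n}(R)`:
(a) for every finite presentation `Λ^a --H--> Λ^b ->> M` with `a ≥ b` one has
`Fit_Λ(H) ⊆ Fit_R(e_{11}M)`; and
(b) `Fit_R(e_{11}M)` is the supremum of the ideals `Fit_Λ(H)` over all such
presentations.  In particular the maximal Fitting invariant of `M` over `Λ`
equals `Fit_Λ(M) = Fit_R(e_{11}M)`. -/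
theorem lamFit_le_and_iSup_eq (n : ℕ) (hn : 0 < n) (R : Type*) [CommRing R] (M : Type*)
    [AddCommGroup M] [Module (Matrix (Fin n) (Fin n) R) M] [Module R M]
    [IsScalarTower R (Matrix (Fin n) (Fin n) R) M]
    [Module.FinitePresentation (Matrix (Fin n) (Fin n) R) M] :
    (∀ (a b : ℕ), b ≤ a → ∀ (H : Matrix (Fin a) (Fin b) (Matrix (Fin n) (Fin n) R))
      (π : (Fin b → Matrix (Fin n) (Fin n) R) →ₗ[Matrix (Fin n) (Fin n) R] M),
      IsNCPresentation H M π → lamFit n R H ≤ fitIdeal R (eComponent n R M ⟨0, hn⟩)) ∧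
    fitIdeal R (eComponent n R M ⟨0, hn⟩) =
      ⨆ (a : ℕ) (b : ℕ) (_ : b ≤ a) (H : Matrix (Fin a) (Fin b) (Matrix (Fin n) (Fin n) R))
        (π : (Fin b → Matrix (Fin n) (Fin n) R) →ₗ[Matrix (Fin n) (Fin n) R] M)
        (_ : IsNCPresentation H M π), lamFit n R H :=
  lamFit_le_and_iSup_eq_general n hn R M
end

section
/- Let G be a finite group with commutator subgroup G', and let p be a prime. Then p does not divide |G'| if and only if G has an abelian Sylow p-subgroup P and a normal p-complement N (a normal subgroup N of G with p ∤ |N| and [G : N] a power of p); in this case G is the internal semidirect product N ⋊ P. -/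
/-!
If `p ∤ |G'|`, a Sylow `p`-subgroup `P` meets `G'` trivially, so every commutator `⁅g, x⁆`
with `g ∈ N_G(P)` and `x ∈ P`, which lies in `P ∩ G'`, is trivial: `N_G(P) ≤ C_G(P)`. In
particular `P` is abelian, and Burnside's transfer theorem yields a normal complement `N` to `P`,
of index `|P|`. Conversely, `G ⧸ N ≃ P` is abelian, so `G' ≤ N` and `|G'|` divides `|N|`.
-/

open Subgroup

open scoped commutatorElement

theorem IsPGroup.disjoint_of_not_dvd_card {G : Type*} [Group G] {p : ℕ} [Fact p.Prime]
    {P H : Subgroup G} (hP : IsPGroup p P) (hH : ¬ p ∣ Nat.card H) : Disjoint P H :=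
  disjoint_iff.mpr <| card_eq_one.mp <| (hP.to_le inf_le_left).card_eq_or_dvd.resolve_right
    fun h => hH (h.trans (card_dvd_of_le inf_le_right))

theorem Subgroup.normalizer_le_centralizer_of_disjoint_commutator {G : Type*} [Group G]
    {H : Subgroup G} (hH : Disjoint H (_root_.commutator G)) :
    normalizer (H : Set G) ≤ centralizer (H : Set G) := by
  intro g hg x hx
  have hmem : ⁅g, x⁆ ∈ H := by
    rw [commutatorElement_def]
    exact mul_mem ((mem_normalizer_iff.mp hg x).mp hx) (inv_mem hx)
  have htriv : ⁅g, x⁆ = 1 :=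
    mem_bot.mp <| hH.le_bot ⟨hmem, commutator_mem_commutator (mem_top g) (mem_top x)⟩
  exact (commutatorElement_eq_one_iff_mul_comm.mp htriv).symm

theorem Subgroup.IsComplement'.commutator_le {G : Type*} [Group G] {N H : Subgroup G} [N.Normal]
    (h : N.IsComplement' H) (hH : ∀ a b : G, a ∈ H → b ∈ H → a * b = b * a) :
    _root_.commutator G ≤ N := by
  let e : G ⧸ N ≃* H := h.symm.QuotientMulEquiv
  refine Normal.quotient_commutative_iff_commutator_le.mp ⟨⟨fun x y => e.injective ?_⟩⟩
  rw [map_mul, map_mul]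
  exact Subtype.ext (hH _ _ (e x).2 (e y).2)

/-- Let `G` be a finite group with commutator subgroup `G'` and let `p` be a prime.
Then `p ∤ |G'|` if and only if `G` has an abelian Sylow `p`-subgroup `P` and a normal
`p`-complement `N` (a normal subgroup of order prime to `p` and of index a power of `p`);
in this case `G` is the internal semidirect product `N ⋊ P`, i.e. `N` and `P` are
complementary subgroups. -/
theorem not_dvd_card_commutator_iff (G : Type*) [Group G] [Finite G] (p : ℕ)
    [Fact p.Prime] :
    (¬ p ∣ Nat.card ↥(commutator G)) ↔
      ∃ (P : Sylow p G) (N : Subgroup G), N.Normal ∧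
        (¬ p ∣ Nat.card ↥N) ∧ (∃ k : ℕ, N.index = p ^ k) ∧
        (∀ a b : G, a ∈ P → b ∈ P → a * b = b * a) ∧
        N.IsComplement' (P : Subgroup G) := by
  constructor
  · intro hG'
    obtain ⟨P⟩ : Nonempty (Sylow p G) := inferInstance
    have hP : normalizer (P : Set G) ≤ centralizer (P : Set G) :=
      normalizer_le_centralizer_of_disjoint_commutator (P.2.disjoint_of_not_dvd_card hG')
    have hcompl := MonoidHom.ker_transferSylow_isComplement' P hP
    refine ⟨P, _, inferInstance, MonoidHom.not_dvd_card_ker_transferSylow P hP, ?_,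
      fun a b ha hb => (hP (P.le_normalizer ha) b hb).symm, hcompl⟩
    rw [hcompl.symm.index_eq_card]
    exact P.2.exists_card_eq
  · rintro ⟨P, N, _, hNp, -, hPcomm, hcompl⟩ hG'
    exact hNp (hG'.trans (card_dvd_of_le (hcompl.commutator_le hPcomm)))
end

section
/- Let Γ be a ring and Λ a subring of Γ, and let ζ(Λ), ζ(Γ) denote their centres. Let r ≥ 1, let N be a Λ-submodule of the left Λ-module Λ^r (viewed inside Γ^r), and let Ñ be the Γ-submodule of Γ^r generated by N. Suppose w ∈ ζ(Γ) satisfies w·Γ ⊆ Λ (i.e. w lies in the central conductor F(Γ,Λ) = {x ∈ ζ(Γ) : xΓ ⊆ Λ}) and y ∈ ζ(Γ) satisfies y·Γ^r ⊆ Ñ. Then wy ∈ ζ(Λ) and (wy)·Λ^r ⊆ N. Consequently, for any finitely generated (left) Λ-module M ≅ Λ^r/N, one has F(Γ,Λ) · Ann_{ζ(Γ)}(Γ ⊗_Λ M) ⊆ Ann_{ζ(Λ)}(M). -/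
/-- The property `∀ g, (w * g) • x ∈ N` survives `x ↦ c • x` (it shifts `g` to `g * c`),
so it passes from `N` to its span. -/
theorem AddSubgroup.smul_mem_of_mem_span {Γ M : Type*} [Ring Γ] [AddCommGroup M] [Module Γ M]
    {N : AddSubgroup M} {w : Γ} (hN : ∀ g : Γ, ∀ v ∈ N, (w * g) • v ∈ N) {x : M}
    (hx : x ∈ Submodule.span Γ (N : Set M)) : w • x ∈ N := by
  suffices ∀ g : Γ, (w * g) • x ∈ N by simpa using this 1
  induction hx using Submodule.span_induction with
  | mem v hv => exact fun g => hN g v hv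
  | zero => simp
  | add x x' _ _ hx hx' => exact fun g => by simpa [smul_add] using N.add_mem (hx g) (hx' g)
  | smul c x _ hx => exact fun g => by simpa [smul_smul, mul_assoc] using hx (g * c)

theorem central_conductor_annihilator_general (Γ : Type*) [Ring Γ] (Λ : Subring Γ)
    (r : ℕ) (N : AddSubgroup (Fin r → Γ))
    (hNsmul : ∀ a ∈ Λ, ∀ v ∈ N, a • v ∈ N)
    (w : Γ) (hw : w ∈ Subring.center Γ) (hwΛ : ∀ g : Γ, w * g ∈ Λ)
    (y : Γ) (hy : y ∈ Subring.center Γ)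
    (hyN : ∀ v : Fin r → Γ, y • v ∈ Submodule.span Γ (N : Set (Fin r → Γ))) :
    (w * y ∈ Λ ∧ ∀ a ∈ Λ, a * (w * y) = (w * y) * a) ∧
      ∀ v : Fin r → Γ, (∀ k : Fin r, v k ∈ Λ) → (w * y) • v ∈ N := by
  refine ⟨⟨hwΛ y, fun a _ => Subring.mem_center_iff.mp (mul_mem hw hy) a⟩, fun v _ => ?_⟩
  rw [mul_smul]
  exact N.smul_mem_of_mem_span (fun g v hv => hNsmul _ (hwΛ g) v hv) (hyN v)

/-- Let `Λ ⊆ Γ` be rings, `r ≥ 1`, and let `N` be a `Λ`-submodule of `Λ^r ⊆ Γ^r`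
(an additive subgroup of `Γ^r` contained in `Λ^r` and stable under left multiplication
by elements of `Λ`).  Let `Ñ` be the `Γ`-submodule of `Γ^r` generated by `N`.
If `w ∈ ζ(Γ)` lies in the central conductor (i.e. `w·Γ ⊆ Λ`) and `y ∈ ζ(Γ)` satisfies
`y·Γ^r ⊆ Ñ`, then `wy ∈ ζ(Λ)` (it lies in `Λ` and is central there) and
`(wy)·Λ^r ⊆ N`.  (Consequently, for a finitely generated `Λ`-module `M ≅ Λ^r/N`, one
has `F(Γ,Λ) · Ann_{ζ(Γ)}(Γ ⊗_Λ M) ⊆ Ann_{ζ(Λ)}(M)`, since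
`Ann_{ζ(Γ)}(Γ ⊗_Λ M) = {y ∈ ζ(Γ) : y·Γ^r ⊆ Ñ}` and `Ann_{ζ(Λ)}(Λ^r/N) ⊇ {z : z·Λ^r ⊆ N}`.) -/
theorem central_conductor_annihilator (Γ : Type*) [Ring Γ] (Λ : Subring Γ)
    (r : ℕ) (hr : 1 ≤ r) (N : AddSubgroup (Fin r → Γ))
    (hNsub : ∀ v ∈ N, ∀ k : Fin r, v k ∈ Λ)
    (hNsmul : ∀ a ∈ Λ, ∀ v ∈ N, a • v ∈ N)
    (w : Γ) (hw : w ∈ Subring.center Γ) (hwΛ : ∀ g : Γ, w * g ∈ Λ)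
    (y : Γ) (hy : y ∈ Subring.center Γ)
    (hyN : ∀ v : Fin r → Γ, y • v ∈ Submodule.span Γ (N : Set (Fin r → Γ))) :
    (w * y ∈ Λ ∧ ∀ a ∈ Λ, a * (w * y) = (w * y) * a) ∧
      ∀ v : Fin r → Γ, (∀ k : Fin r, v k ∈ Λ) → (w * y) • v ∈ N :=
  central_conductor_annihilator_general Γ Λ r N hNsmul w hw hwΛ y hy hyN
end
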